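/- arXiv:0905.1047 — 9 statements merged into one kernel-verified Lean document; each statement's English description precedes it below -/
import Mathlib

section
/- Let E be a real normed space, let c ∈ E, and define ψ : E → E by ψ(z) = 2c − z. Suppose L is a non-empty bounded subset of E such that c ∈ L and ψ(L) = L. If 𝒯 : L → L is a surjective isometry (‖𝒯(a) − 𝒯(b)‖ = ‖a − b‖ for all a, b ∈ L), then 𝒯(c) = c. -/
/-- Lemma 2.1 (Vaisala-type fixed point lemma): if `L` is a non-empty bounded
subset of a real normed space `E`, `c ∈ L`, `L` is symmetric about `c`
(i.e. `ψ(L) = L` where `ψ z = 2c - z`), and `T` is a surjective isometry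
from `L` onto itself, then `T c = c`. -/
theorem isometry_fixed_point_of_symmetric_bounded
    {E : Type*} [NormedAddCommGroup E] [NormedSpace ℝ E]
    (c : E) (L : Set E) (hne : L.Nonempty) (hbdd : Bornology.IsBounded L)
    (hcL : c ∈ L) (hsymm : (fun z : E => 2 • c - z) '' L = L)
    (T : E → E) (hmaps : Set.MapsTo T L L) (hsurj : Set.SurjOn T L L)
    (hiso : ∀ a ∈ L, ∀ b ∈ L, ‖T a - T b‖ = ‖a - b‖) :
    T c = c := by
  classical
  set ψ : E → E := fun z => 2 • c - z with hψ
  have hψmaps : Set.MapsTo ψ L L := by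
    intro x hx
    have : ψ x ∈ ψ '' L := ⟨x, hx, rfl⟩
    rwa [hsymm] at this
  have hψc : ψ c = c := by
    simp only [hψ, two_nsmul]; abel
  have hψiso : ∀ a b : E, ‖ψ a - ψ b‖ = ‖a - b‖ := by
    intro a b
    have : ψ a - ψ b = b - a := by simp only [hψ]; abel
    rw [this, norm_sub_rev]
  -- the set of displacement values of c under surjective self-isometries of L
  set S : Set ℝ := {r : ℝ | ∃ f : E → E, Set.MapsTo f L L ∧ Set.SurjOn f L L ∧
      (∀ a ∈ L, ∀ b ∈ L, ‖f a - f b‖ = ‖a - b‖) ∧ r = ‖f c - c‖} with hS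
  have hTS : ‖T c - c‖ ∈ S := ⟨T, hmaps, hsurj, hiso, rfl⟩
  have hSne : S.Nonempty := ⟨_, hTS⟩
  obtain ⟨C, hC⟩ := Metric.isBounded_iff.mp hbdd
  have hbddS : BddAbove S := by
    refine ⟨C, ?_⟩
    rintro r ⟨f, hfm, _, _, rfl⟩
    have := hC (hfm hcL) hcL
    rwa [dist_eq_norm] at this
  -- doubling: if r ∈ S then 2*r ∈ S
  have hdouble : ∀ r ∈ S, 2 * r ∈ S := by
    rintro r ⟨f, hfm, hfs, hfi, rfl⟩
    -- inverse of f on L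
    have hex : ∀ y ∈ L, ∃ x, x ∈ L ∧ f x = y := fun y hy => hfs hy
    set g : E → E := fun y => if h : y ∈ L then (hex y h).choose else y with hg
    have hgL : ∀ y ∈ L, g y ∈ L := by
      intro y hy; simp only [hg, dif_pos hy]; exact (hex y hy).choose_spec.1
    have hfg : ∀ y ∈ L, f (g y) = y := by
      intro y hy; simp only [hg, dif_pos hy]; exact (hex y hy).choose_spec.2
    have hgm : Set.MapsTo g L L := hgL
    have hginj : ∀ a ∈ L, ∀ b ∈ L, f a = f b → a = b := by
      intro a ha b hb hab
      have : ‖a - b‖ = 0 := by rw [← hfi a ha b hb, hab, sub_self, norm_zero]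
      exact sub_eq_zero.mp (norm_eq_zero.mp this)
    have hgs : Set.SurjOn g L L := by
      intro x hx
      refine ⟨f x, hfm hx, ?_⟩
      exact hginj _ (hgL _ (hfm hx)) _ hx (by rw [hfg _ (hfm hx)])
    have hgi : ∀ a ∈ L, ∀ b ∈ L, ‖g a - g b‖ = ‖a - b‖ := by
      intro a ha b hb
      rw [← hfi _ (hgL a ha) _ (hgL b hb), hfg a ha, hfg b hb]
    -- F = ψ ∘ g ∘ ψ ∘ f
    refine ⟨fun x => ψ (g (ψ (f x))), ?_, ?_, ?_, ?_⟩
    · intro x hx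
      exact hψmaps (hgL _ (hψmaps (hfm hx)))
    · intro y hy
      obtain ⟨y1, hy1, hy1e⟩ := hsymm.ge hy
      obtain ⟨y2, hy2, hy2e⟩ := hgs hy1
      obtain ⟨y3, hy3, hy3e⟩ := hsymm.ge hy2
      obtain ⟨y4, hy4, hy4e⟩ := hfs hy3
      exact ⟨y4, hy4, by simp only [hy4e, hy3e, hy2e, hy1e]⟩
    · intro a ha b hb
      rw [hψiso, hgi _ (hψmaps (hfm ha)) _ (hψmaps (hfm hb)), hψiso,
        hfi a ha b hb]
    · have h1 : ψ (g (ψ (f c))) - c = ψ (g (ψ (f c))) - ψ c := by rw [hψc]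
      rw [h1, hψiso, ← hfi _ (hgL _ (hψmaps (hfm hcL))) _ hcL,
        hfg _ (hψmaps (hfm hcL))]
      have h2 : ψ (f c) - f c = (2 : ℝ) • (c - f c) := by
        simp only [hψ, two_nsmul, two_smul]; abel
      rw [h2, norm_smul, norm_sub_rev]
      simp
  -- conclude
  set M := sSup S with hM
  have hle : ∀ r ∈ S, r ≤ M / 2 := by
    intro r hr
    have := le_csSup hbddS (hdouble r hr)
    linarith
  have hM2 : M ≤ M / 2 := csSup_le hSne hle
  have hMle0 : M ≤ 0 := by linarith
  have h0 : ‖T c - c‖ ≤ 0 := le_trans (le_csSup hbddS hTS) hMle0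
  have := le_antisymm h0 (norm_nonneg _)
  have := norm_eq_zero.mp this
  exact sub_eq_zero.mp this
end

section
/- Let ℬ₁ be a real normed space and let ℬ₂ be a real vector space equipped with a metric d satisfying d(a + u, b + u) = d(a, b) for all a, b, u ∈ ℬ₂ and for which addition and real scalar multiplication are jointly continuous. Let U₁ ⊆ ℬ₁ and U₂ ⊆ ℬ₂ be non-empty open subsets, and let 𝒯 : U₁ → U₂ be a surjective map satisfying d(𝒯(a), 𝒯(b)) = ‖a − b‖ for all a, b ∈ U₁. If f, g ∈ U₁ are such that (1 − r)f + rg ∈ U₁ for every r with 0 ≤ r ≤ 1, then 𝒯((f + g)/2) = (𝒯(f) + 𝒯(g))/2. -/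
namespace MidpointAux

variable {α : Type*}

/-- evaluate a word in two involutive generators -/
def wEval (r h : α → α) : List Bool → α → α
  | [], x => x
  | (b :: w), x => (bif b then r else h) (wEval r h w x)

def wseq : ℕ → List Bool
  | 0 => [false]
  | n + 1 => true :: ((wseq n).reverse ++ true :: wseq n)

variable {r h : α → α} {G : α → Prop}

lemma wEval_append (w₁ w₂ : List Bool) (x : α) :
    wEval r h (w₁ ++ w₂) x = wEval r h w₁ (wEval r h w₂ x) := by
  induction w₁ with
  | nil => rfl
  | cons b t ih => simp [wEval, ih]

section
variable (hr : ∀ x, G x → G (r x)) (hh : ∀ x, G x → G (h x))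
include hr hh

lemma wEval_good : ∀ (w : List Bool) (x : α), G x → G (wEval r h w x) := by
  intro w
  induction w with
  | nil => exact fun x hx => hx
  | cons b t ih =>
    intro x hx
    cases b
    · exact hh _ (ih x hx)
    · exact hr _ (ih x hx)

lemma wEval_rev (hri : ∀ x, G x → r (r x) = x) (hhi : ∀ x, G x → h (h x) = x) :
    ∀ (w : List Bool) (x : α), G x → wEval r h w.reverse (wEval r h w x) = x := by
  intro w
  induction w with
  | nil => exact fun x _ => rfl
  | cons b t ih =>
    intro x hx
    have hgx : G (wEval r h t x) := wEval_good hr hh t x hx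
    rw [List.reverse_cons, wEval_append]
    have : wEval r h [b] (wEval r h (b :: t) x) = wEval r h t x := by
      cases b
      · exact hhi _ hgx
      · exact hri _ hgx
    rw [this]
    exact ih x hx

lemma wEval_iso (D : α → α → ℝ)
    (hrD : ∀ x y, G x → G y → D (r x) (r y) = D x y)
    (hhD : ∀ x y, G x → G y → D (h x) (h y) = D x y) :
    ∀ (w : List Bool) (x y : α), G x → G y →
      D (wEval r h w x) (wEval r h w y) = D x y := by
  intro w
  induction w with
  | nil => exact fun x y _ _ => rfl
  | cons b t ih =>
    intro x y hx hy
    have hgx := wEval_good hr hh t x hx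
    have hgy := wEval_good hr hh t y hy
    cases b
    · show D (h _) (h _) = _
      rw [hhD _ _ hgx hgy]; exact ih x y hx hy
    · show D (r _) (r _) = _
      rw [hrD _ _ hgx hgy]; exact ih x y hx hy

omit hr hh in
lemma wEval_pair {f g : α}
    (hrf : r f = g) (hrg : r g = f) (hhf : h f = g) (hhg : h g = f) :
    ∀ w : List Bool, (wEval r h w f = f ∧ wEval r h w g = g) ∨
      (wEval r h w f = g ∧ wEval r h w g = f) := by
  intro w
  induction w with
  | nil => exact Or.inl ⟨rfl, rfl⟩
  | cons b t ih =>
    rcases ih with ⟨h1, h2⟩ | ⟨h1, h2⟩ <;> cases b <;>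
      simp only [wEval, cond_false, cond_true, h1, h2] <;>
      [exact Or.inr ⟨hhf, hhg⟩; exact Or.inr ⟨hrf, hrg⟩;
       exact Or.inl ⟨hhg, hhf⟩; exact Or.inl ⟨hrg, hrf⟩]

end


open Set Metric

theorem midpoint_local
    {B1 : Type*} [NormedAddCommGroup B1] [NormedSpace ℝ B1]
    {B2 : Type*} [AddCommGroup B2] [Module ℝ B2] [MetricSpace B2]
    (htrans : ∀ a b u : B2, dist (a + u) (b + u) = dist a b)
    (U1 : Set B1) (U2 : Set B2)
    (T : B1 → B2) (hsurj : Set.SurjOn T U1 U2)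
    (hiso : ∀ a ∈ U1, ∀ b ∈ U1, dist (T a) (T b) = ‖a - b‖)
    (f g : B1)
    (hball1 : Metric.closedBall ((2:ℝ)⁻¹ • (f + g)) (2 * ‖f - g‖) ⊆ U1)
    (hball2 : ∀ y : B2, dist y (T f) ≤ 2 * ‖f - g‖ → y ∈ U2) :
    T ((2:ℝ)⁻¹ • (f + g)) = (2:ℝ)⁻¹ • (T f + T g) := by
  set m : B1 := (2:ℝ)⁻¹ • (f + g) with hm
  set L : ℝ := ‖f - g‖ with hLdef
  have hL0 : 0 ≤ L := norm_nonneg _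
  have h2m : (2:ℝ) • m = f + g := by
    rw [hm, smul_smul]; norm_num
  have hfm : ‖f - m‖ = L / 2 := by
    have e : f - m = (2:ℝ)⁻¹ • (f - g) := by rw [hm]; module
    rw [e, norm_smul, hLdef]; simp; ring
  have hgm : ‖g - m‖ = L / 2 := by
    have e : g - m = (2:ℝ)⁻¹ • (g - f) := by rw [hm]; module
    rw [e, norm_smul, hLdef, norm_sub_rev f g]; simp; ring
  -- basic memberships
  have hfU : f ∈ U1 := hball1 (by
    rw [mem_closedBall, dist_eq_norm, hfm]; linarith)
  have hgU : g ∈ U1 := hball1 (by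
    rw [mem_closedBall, dist_eq_norm, hgm]; linarith)
  have hmU : m ∈ U1 := hball1 (mem_closedBall_self (by positivity))
  -- injectivity of T on U1
  have hinj : ∀ a ∈ U1, ∀ b ∈ U1, T a = T b → a = b := by
    intro a ha b hb hab
    have := hiso a ha b hb
    rw [hab, dist_self] at this
    rwa [eq_comm, norm_eq_zero, sub_eq_zero] at this
  -- inverse of T
  set Ti : B2 → B1 := Function.invFunOn T U1 with hTi
  have hTiU : ∀ y ∈ U2, Ti y ∈ U1 := by
    intro y hy
    exact Function.invFunOn_mem (by rcases hsurj hy with ⟨a, ha, rfl⟩; exact ⟨a, ha, rfl⟩)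
  have hTTi : ∀ y ∈ U2, T (Ti y) = y := by
    intro y hy
    exact Function.invFunOn_eq (by rcases hsurj hy with ⟨a, ha, rfl⟩; exact ⟨a, ha, rfl⟩)
  have hTiT : ∀ x ∈ U1, T x ∈ U2 → Ti (T x) = x := by
    intro x hx hy
    exact hinj _ (hTiU _ hy) _ hx (hTTi _ hy)
  -- the reflection in B2
  set σ : B2 → B2 := fun y => T f + T g - y with hσ
  have hσiso : ∀ a b : B2, dist (σ a) (σ b) = dist a b := by
    intro a b
    have e1 : σ a + (a + b - (T f + T g)) = b := by simp only [hσ]; abel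
    have e2 : σ b + (a + b - (T f + T g)) = a := by simp only [hσ]; abel
    rw [← htrans (σ a) (σ b) (a + b - (T f + T g)), e1, e2, dist_comm]
  have hσf : σ (T f) = T g := by simp only [hσ]; abel
  have hσg : σ (T g) = T f := by simp only [hσ]; abel
  have hσσ : ∀ y, σ (σ y) = y := by intro y; simp only [hσ]; abel
  have hTfU2 : T f ∈ U2 := hball2 _ (by rw [dist_self]; positivity)
  have hTgU2 : T g ∈ U2 := hball2 _ (by
    rw [hiso g hgU f hfU, norm_sub_rev]; linarith)
  -- the two generators
  set ρ : B1 → B1 := fun x => f + g - x with hρ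
  set h : B1 → B1 := fun x => Ti (σ (T x)) with hh
  -- the good region
  set G : B1 → Prop := fun x => x ∈ U1 ∧ ‖x - f‖ ≤ 3 / 2 * L ∧ ‖x - g‖ ≤ 3 / 2 * L with hG
  have hGf : G f := ⟨hfU, by simp only [sub_self, norm_zero]; linarith,
    by rw [← hLdef]; linarith⟩
  have hGg : G g := ⟨hgU, by rw [norm_sub_rev g f, ← hLdef]; linarith,
    by simp only [sub_self, norm_zero]; linarith⟩
  have hGm : G m := ⟨hmU, by rw [norm_sub_rev, hfm]; linarith, by rw [norm_sub_rev, hgm]; linarith⟩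
  -- ρ facts
  have hρdist : ∀ x y : B1, ‖ρ x - ρ y‖ = ‖x - y‖ := by
    intro x y
    have e : ρ x - ρ y = -(x - y) := by simp only [hρ]; abel
    rw [e, norm_neg]
  have hρm : ρ m = m := by
    simp only [hρ]; rw [← h2m]; module
  have hρρ : ∀ x, ρ (ρ x) = x := by intro x; simp only [hρ]; abel
  have hρf : ρ f = g := by simp only [hρ]; abel
  have hρg : ρ g = f := by simp only [hρ]; abel
  have hρG : ∀ x, G x → G (ρ x) := by
    rintro x ⟨hx1, hx2, hx3⟩
    refine ⟨hball1 ?_, ?_, ?_⟩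
    · rw [mem_closedBall, dist_eq_norm, ← hρm, hρdist]
      have htri : ‖x - m‖ ≤ ‖x - f‖ + ‖f - m‖ := by
        have := dist_triangle x f m
        simpa [dist_eq_norm] using this
      linarith [hfm]
    · have e : ρ x - f = -(x - g) := by simp only [hρ]; abel
      rw [e, norm_neg]; exact hx3
    · have e : ρ x - g = -(x - f) := by simp only [hρ]; abel
      rw [e, norm_neg]; exact hx2
  -- h facts
  have hσT_mem : ∀ x, G x → σ (T x) ∈ U2 := by
    rintro x ⟨hx1, hx2, hx3⟩
    apply hball2
    rw [← hσg, hσiso (T x) (T g), hiso x hx1 g hgU]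
    linarith
  have hTh : ∀ x, G x → T (h x) = σ (T x) := by
    intro x hx
    exact hTTi _ (hσT_mem x hx)
  have hhU : ∀ x, G x → h x ∈ U1 := by
    intro x hx
    exact hTiU _ (hσT_mem x hx)
  have hhdist : ∀ x y, G x → G y → ‖h x - h y‖ = ‖x - y‖ := by
    intro x y hx hy
    rw [← hiso _ (hhU x hx) _ (hhU y hy), hTh x hx, hTh y hy, hσiso,
      hiso x hx.1 y hy.1]
  have hhf : h f = g := by
    rw [hh]
    show Ti (σ (T f)) = g
    rw [hσf]
    exact hTiT g hgU hTgU2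
  have hhg : h g = f := by
    rw [hh]
    show Ti (σ (T g)) = f
    rw [hσg]
    exact hTiT f hfU hTfU2
  have hhG : ∀ x, G x → G (h x) := by
    intro x hx
    have e1 : ‖h x - f‖ = ‖x - g‖ := by
      have := hhdist x g hx hGg
      rwa [hhg] at this
    have e2 : ‖h x - g‖ = ‖x - f‖ := by
      have := hhdist x f hx hGf
      rwa [hhf] at this
    exact ⟨hhU x hx, by rw [e1]; exact hx.2.2, by rw [e2]; exact hx.2.1⟩
  have hhinv : ∀ x, G x → h (h x) = x := by
    intro x hx
    have hTx : T x ∈ U2 := by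
      apply hball2
      rw [hiso x hx.1 f hfU]
      linarith [hx.2.1]
    have : T (h (h x)) = T x := by
      rw [hTh _ (hhG x hx), hTh x hx, hσσ]
    exact hinj _ (hhU _ (hhG x hx)) _ hx.1 this
  -- word lemmas
  have EG : ∀ w x, G x → G (wEval ρ h w x) := wEval_good hρG hhG
  have Erev : ∀ w x, G x → wEval ρ h w.reverse (wEval ρ h w x) = x :=
    wEval_rev hρG hhG (fun x _ => hρρ x) hhinv
  have Eiso : ∀ w x y, G x → G y →
      (fun a b : B1 => ‖a - b‖) (wEval ρ h w x) (wEval ρ h w y) = ‖x - y‖ :=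
    wEval_iso hρG hhG (fun a b => ‖a - b‖) (fun x y _ _ => hρdist x y) hhdist
  have Epair := wEval_pair (r := ρ) (h := h) hρf hρg hhf hhg
  -- distance bound
  have hbound : ∀ w, ‖wEval ρ h w m - m‖ ≤ L := by
    intro w
    have htri1 : ‖wEval ρ h w m - m‖ ≤ ‖wEval ρ h w m - wEval ρ h w f‖ + ‖wEval ρ h w f - m‖ := by
      have := dist_triangle (wEval ρ h w m) (wEval ρ h w f) m
      simpa [dist_eq_norm] using this
    have hIso := Eiso w m f hGm hGf
    simp only at hIso
    have hmf : ‖m - f‖ = L / 2 := by rw [norm_sub_rev, hfm]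
    rcases Epair w with ⟨h1, _⟩ | ⟨h1, _⟩
    · rw [h1] at htri1
      rw [h1] at hIso
      rw [hIso, hmf] at htri1
      linarith [hfm]
    · rw [h1] at htri1
      rw [h1] at hIso
      rw [hIso, hmf] at htri1
      linarith [hgm]
  -- doubling
  have hρmdist : ∀ y : B1, ‖ρ y - y‖ = 2 * ‖y - m‖ := by
    intro y
    have e : ρ y - y = (2:ℝ) • (m - y) := by simp only [hρ]; rw [← h2m]; module
    rw [e, norm_smul, norm_sub_rev]
    simp
  have hdbl : ∀ n, ‖wEval ρ h (wseq (n+1)) m - m‖ = 2 * ‖wEval ρ h (wseq n) m - m‖ := by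
    intro n
    have hGa : G (wEval ρ h (wseq n) m) := EG _ _ hGm
    have hGρa : G (ρ (wEval ρ h (wseq n) m)) := hρG _ hGa
    have e1 : wEval ρ h (wseq (n+1)) m
        = ρ (wEval ρ h (wseq n).reverse (ρ (wEval ρ h (wseq n) m))) := by
      show (bif true then ρ else h) (wEval ρ h ((wseq n).reverse ++ true :: wseq n) m) = _
      rw [wEval_append]; rfl
    have e3 : ‖wEval ρ h (wseq n).reverse (ρ (wEval ρ h (wseq n) m))
        - wEval ρ h (wseq n).reverse (wEval ρ h (wseq n) m)‖
        = ‖ρ (wEval ρ h (wseq n) m) - wEval ρ h (wseq n) m‖ :=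
      Eiso (wseq n).reverse _ _ hGρa hGa
    rw [e1]
    calc ‖ρ (wEval ρ h (wseq n).reverse (ρ (wEval ρ h (wseq n) m))) - m‖
        = ‖ρ (wEval ρ h (wseq n).reverse (ρ (wEval ρ h (wseq n) m))) - ρ m‖ := by rw [hρm]
      _ = ‖wEval ρ h (wseq n).reverse (ρ (wEval ρ h (wseq n) m)) - m‖ := hρdist _ _
      _ = ‖wEval ρ h (wseq n).reverse (ρ (wEval ρ h (wseq n) m))
            - wEval ρ h (wseq n).reverse (wEval ρ h (wseq n) m)‖ := by
          rw [Erev (wseq n) m hGm]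
      _ = ‖ρ (wEval ρ h (wseq n) m) - wEval ρ h (wseq n) m‖ := e3
      _ = 2 * ‖wEval ρ h (wseq n) m - m‖ := hρmdist _
  have hgeo : ∀ n, ‖wEval ρ h (wseq n) m - m‖ = 2 ^ n * ‖h m - m‖ := by
    intro n
    induction n with
    | zero => simp [wseq, wEval]
    | succ k ih => rw [hdbl k, ih, pow_succ]; ring
  have ht0 : h m = m := by
    by_contra hne
    have hpos : 0 < ‖h m - m‖ := by
      rw [norm_pos_iff, sub_ne_zero]; exact hne
    obtain ⟨n, hn⟩ := pow_unbounded_of_one_lt (L / ‖h m - m‖) one_lt_two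
    have h2 := hbound (wseq n)
    rw [hgeo n] at h2
    have hlt : L < 2 ^ n * ‖h m - m‖ := by
      rwa [div_lt_iff₀ hpos] at hn
    linarith
  have hσTm : σ (T m) = T m := by
    have := congrArg T ht0
    rwa [hTh m hGm] at this
  have hsum : T f + T g = T m + T m := by
    have h5 : T f + T g - T m = T m := by
      have := hσTm
      simp only [hσ] at this
      exact this
    rwa [sub_eq_iff_eq_add] at h5
  rw [hsum, ← two_smul ℝ (T m), smul_smul]
  norm_num

end MidpointAux

/-- Lemma 2.2: a surjective isometry from an open subset of a real normed space
onto an open subset of a metric real linear space preserves midpoints of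
segments contained in the domain. -/
theorem isometry_midpoint_of_segment_subset
    {B1 : Type*} [NormedAddCommGroup B1] [NormedSpace ℝ B1]
    {B2 : Type*} [AddCommGroup B2] [Module ℝ B2] [MetricSpace B2]
    (htrans : ∀ a b u : B2, dist (a + u) (b + u) = dist a b)
    (haddcont : Continuous fun p : B2 × B2 => p.1 + p.2)
    (hsmulcont : Continuous fun p : ℝ × B2 => p.1 • p.2)
    (U1 : Set B1) (U2 : Set B2) (hU1ne : U1.Nonempty) (hU2ne : U2.Nonempty)
    (hU1 : IsOpen U1) (hU2 : IsOpen U2)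
    (T : B1 → B2) (hmaps : Set.MapsTo T U1 U2) (hsurj : Set.SurjOn T U1 U2)
    (hiso : ∀ a ∈ U1, ∀ b ∈ U1, dist (T a) (T b) = ‖a - b‖)
    (f g : B1) (hf : f ∈ U1) (hg : g ∈ U1)
    (hseg : ∀ r : ℝ, 0 ≤ r → r ≤ 1 → (1 - r) • f + r • g ∈ U1) :
    T ((2 : ℝ)⁻¹ • (f + g)) = (2 : ℝ)⁻¹ • (T f + T g) := by
  classical
  set L : ℝ := ‖f - g‖ with hLdef
  have hL0 : 0 ≤ L := norm_nonneg _
  set γ : ℝ → B1 := fun r => (1 - r) • f + r • g with hγ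
  have hγ0 : γ 0 = f := by simp [hγ]
  have hγ1 : γ 1 = g := by simp [hγ]
  have hγmem : ∀ r ∈ Set.Icc (0:ℝ) 1, γ r ∈ U1 := fun r hr => hseg r hr.1 hr.2
  have hγdist : ∀ a b : ℝ, ‖γ a - γ b‖ = |a - b| * L := by
    intro a b
    have e : γ a - γ b = (b - a) • (f - g) := by simp only [hγ]; module
    rw [e, norm_smul, Real.norm_eq_abs, abs_sub_comm, hLdef]
  have hγmid : ∀ a b : ℝ, (2:ℝ)⁻¹ • (γ a + γ b) = γ ((a + b) / 2) := by
    intro a b; simp only [hγ]; module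
  have hγcont : Continuous γ := by
    simp only [hγ]; fun_prop
  -- a uniform norm-neighborhood of the segment inside U1
  have hK1 : IsCompact (γ '' Set.Icc 0 1) := isCompact_Icc.image hγcont
  obtain ⟨ε, hε, hεsub⟩ := hK1.exists_thickening_subset_open hU1
    (by rintro _ ⟨r, hr, rfl⟩; exact hγmem r hr)
  have hU1' : ∀ r ∈ Set.Icc (0:ℝ) 1, ∀ x : B1, dist x (γ r) ≤ ε / 2 → x ∈ U1 := by
    intro r hr x hx
    exact hεsub (Metric.mem_thickening_iff.2
      ⟨γ r, Set.mem_image_of_mem _ hr, lt_of_le_of_lt hx (by linarith)⟩)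
  -- a uniform metric neighborhood of the image curve inside U2
  have hccont : ContinuousOn (fun r => T (γ r)) (Set.Icc 0 1) := by
    apply LipschitzOnWith.continuousOn (K := Real.toNNReal L)
    apply LipschitzOnWith.of_dist_le_mul
    intro a ha b hb
    rw [hiso _ (hγmem a ha) _ (hγmem b hb), hγdist, Real.coe_toNNReal _ hL0, Real.dist_eq]
    exact le_of_eq (mul_comm _ _)
  have hK2 : IsCompact ((fun r => T (γ r)) '' Set.Icc 0 1) :=
    isCompact_Icc.image_of_continuousOn hccont
  obtain ⟨η, hη, hηsub⟩ := hK2.exists_thickening_subset_open hU2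
    (by rintro _ ⟨r, hr, rfl⟩; exact hmaps (hγmem r hr))
  have hU2' : ∀ r ∈ Set.Icc (0:ℝ) 1, ∀ y : B2, dist y (T (γ r)) ≤ η / 2 → y ∈ U2 := by
    intro r hr y hy
    exact hηsub (Metric.mem_thickening_iff.2
      ⟨T (γ r), Set.mem_image_of_mem _ hr, lt_of_le_of_lt hy (by linarith)⟩)
  -- choice of the subdivision size
  set δ : ℝ := min (ε / 2) (η / 2) with hδ
  have hδpos : 0 < δ := lt_min (by linarith) (by linarith)
  obtain ⟨n, hn⟩ := pow_unbounded_of_one_lt (4 * L / δ) one_lt_two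
  set N : ℕ := 2 ^ (n + 1) with hN
  have hNR : (N : ℝ) = 2 * 2 ^ n := by rw [hN]; push_cast; ring
  have hNpos : (0:ℝ) < N := by rw [hNR]; positivity
  have hsmall : 4 * L / N ≤ δ := by
    rw [div_le_iff₀ hNpos]
    have h1 : 4 * L < 2 ^ n * δ := by
      rw [div_lt_iff₀ hδpos] at hn; linarith
    have h2 : (2:ℝ) ^ n * δ ≤ N * δ := by
      rw [hNR]; nlinarith [pow_pos (show (0:ℝ) < 2 by norm_num) n]
    linarith
  -- the subdivision points
  set u : ℕ → B2 := fun i => T (γ (i / N)) with hu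
  have hmemr : ∀ i : ℕ, i ≤ N → ((i:ℝ) / N) ∈ Set.Icc (0:ℝ) 1 := by
    intro i hi
    constructor
    · positivity
    · rw [div_le_one hNpos]; exact_mod_cast hi
  -- midpoint relations from the local lemma
  have hmid : ∀ i : ℕ, i + 2 ≤ N →
      u (i + 1) = (2:ℝ)⁻¹ • (u i + u (i + 2)) := by
    intro i hi
    have hia : ((i:ℝ) / N) ∈ Set.Icc (0:ℝ) 1 := hmemr i (by omega)
    have hib : (((i:ℝ) + 2) / N) ∈ Set.Icc (0:ℝ) 1 := by
      have := hmemr (i + 2) hi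
      push_cast at this
      exact this
    have hic : (((i:ℝ) + 1) / N) ∈ Set.Icc (0:ℝ) 1 := by
      have := hmemr (i + 1) (by omega)
      push_cast at this
      exact this
    have hdist2 : 2 * ‖γ ((i:ℝ)/N) - γ (((i:ℝ)+2)/N)‖ = 4 * L / N := by
      rw [hγdist]
      rw [abs_of_nonpos (by rw [sub_nonpos]; gcongr; linarith)]
      field_simp
      ring
    have hmideq : ((i:ℝ)/N + ((i:ℝ)+2)/N) / 2 = ((i:ℝ)+1)/N := by
      field_simp; ring
    have hloc := MidpointAux.midpoint_local htrans U1 U2 T hsurj hiso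
      (γ ((i:ℝ)/N)) (γ (((i:ℝ)+2)/N))
      (by
        rw [hγmid, hmideq]
        intro x hx
        rw [Metric.mem_closedBall, hdist2] at hx
        exact hU1' _ hic x (le_trans hx (le_trans hsmall (min_le_left _ _))))
      (by
        intro y hy
        rw [hdist2] at hy
        exact hU2' _ hia y (le_trans hy (le_trans hsmall (min_le_right _ _))))
    rw [hγmid, hmideq] at hloc
    have e1 : u (i+1) = T (γ (((i:ℝ)+1)/N)) := by rw [hu]; push_cast; rfl
    have e2 : u i = T (γ ((i:ℝ)/N)) := rfl
    have e3 : u (i+2) = T (γ (((i:ℝ)+2)/N)) := by rw [hu]; push_cast; rfl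
    rw [e1, e2, e3, hloc]
  -- constant difference
  set v : B2 := u 1 - u 0 with hv
  have hstep : ∀ i : ℕ, i + 1 ≤ N → u (i + 1) - u i = v := by
    intro i
    induction i with
    | zero => intro _; rfl
    | succ k ih =>
      intro hk
      have hk' : k + 2 ≤ N := hk
      have e := hmid k hk'
      have h2 : (2:ℝ) • u (k+1) = u k + u (k+2) := by
        rw [e, smul_inv_smul₀ (two_ne_zero)]
      rw [two_smul] at h2
      have key : u (k + 2) - u (k + 1) = u (k + 1) - u k := by
        calc u (k+2) - u (k+1) = u k + u (k+2) - u (k+1) - u k := by abel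
          _ = u (k+1) + u (k+1) - u (k+1) - u k := by rw [h2]
          _ = u (k+1) - u k := by abel
      rw [key]
      exact ih (by omega)
  -- linear growth
  have hlin : ∀ i : ℕ, i ≤ N → u i = u 0 + (i:ℝ) • v := by
    intro i
    induction i with
    | zero => intro _; simp
    | succ k ih =>
      intro hk
      have h1 := hstep k hk
      have h2 := ih (by omega)
      have : u (k+1) = u k + v := by rw [← h1]; abel
      rw [this, h2]
      push_cast
      module
  -- conclude
  have hu0 : u 0 = T f := by rw [hu]; simp [hγ0]
  have huN : u N = T g := by
    have : ((N:ℝ) / N) = 1 := div_self (ne_of_gt hNpos)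
    rw [hu]; simp only [this, hγ1]
  have huH : u (2 ^ n) = T ((2:ℝ)⁻¹ • (f + g)) := by
    have e : ((2:ℝ) ^ n) / N = 1 / 2 := by
      rw [hNR]; field_simp
    have e2 : ((2 ^ n : ℕ) : ℝ) = (2:ℝ) ^ n := by push_cast; rfl
    have e3 : (2:ℝ)⁻¹ • (f + g) = γ (1/2) := by
      rw [← hγ0, ← hγ1, hγmid]; norm_num
    rw [hu]
    show T (γ (((2 ^ n : ℕ) : ℝ) / N)) = _
    rw [e2, e, e3]
  have hN2 := hlin N (le_refl N)
  have hH2 := hlin (2 ^ n) (by rw [hN]; exact Nat.pow_le_pow_right (by norm_num) (by omega))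
  rw [huN] at hN2
  rw [huH] at hH2
  rw [hH2, hu0, hN2, hu0]
  have : ((2 ^ n : ℕ) : ℝ) = (2:ℝ) ^ n := by push_cast; rfl
  rw [this, hNR]
  module
end

section
/- There exist a non-empty open subset U of the complex Banach space ℂ² equipped with the supremum norm ‖(z, w)‖ = max(|z|, |w|) and a surjective isometry 𝒯 : U → U such that there is no real-linear isometry S : ℂ² → ℂ² and vector v ∈ ℂ² with 𝒯(f) = S(f) + v for all f ∈ U. (Concretely, one may take U = {f : ‖f‖ < 1} ∪ {f : ‖f − f₀‖ < 1} where f₀ = (0, 10), and 𝒯 defined by 𝒯(z, w) = (−z, w) on the first ball and 𝒯(f) = f on the second.) -/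
noncomputable section

/-- The map: flip the sign of the first coordinate on the unit ball, identity elsewhere. -/
def myT (f : ℂ × ℂ) : ℂ × ℂ := if ‖f‖ < 1 then (-f.1, f.2) else f

lemma mynorm_prod (f : ℂ × ℂ) : ‖f‖ = max ‖f.1‖ ‖f.2‖ := rfl

lemma mynorm_mk (a b : ℂ) : ‖((a, b) : ℂ × ℂ)‖ = max ‖a‖ ‖b‖ := rfl

/-- Example 2.3: there is a surjective isometry of a non-empty open subset of
`ℂ²` (with the supremum norm, realized as the product norm on `ℂ × ℂ`) onto
itself which does not extend to a real-linear isometry up to translation. -/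
theorem exists_isometry_open_subset_no_reallinear_extension :
    ∃ (U : Set (ℂ × ℂ)) (T : ℂ × ℂ → ℂ × ℂ),
      U.Nonempty ∧ IsOpen U ∧
      Set.MapsTo T U U ∧ Set.SurjOn T U U ∧
      (∀ a ∈ U, ∀ b ∈ U, ‖T a - T b‖ = ‖a - b‖) ∧
      ¬ ∃ (S : (ℂ × ℂ) →ₗ[ℝ] ℂ × ℂ) (v : ℂ × ℂ),
          Isometry S ∧ ∀ f ∈ U, T f = S f + v := by
  set f₀ : ℂ × ℂ := ((0 : ℂ), (10 : ℂ)) with hf₀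
  refine ⟨{f | ‖f‖ < 1} ∪ {f | ‖f - f₀‖ < 1}, myT, ⟨0, ?_⟩, ?_, ?_, ?_, ?_, ?_⟩
  · left; simp
  · exact (isOpen_lt continuous_norm continuous_const).union
      (isOpen_lt ((continuous_id.sub continuous_const).norm) continuous_const)
  all_goals
    have hnf₀ : ‖f₀‖ = 10 := by rw [hf₀, mynorm_mk]; simp
    have hdisj : ∀ f : ℂ × ℂ, ‖f - f₀‖ < 1 → ¬ ‖f‖ < 1 := by
      intro f hf hf'
      have he : f - (f - f₀) = f₀ := by abel
      have : ‖f₀‖ ≤ ‖f‖ + ‖f - f₀‖ :=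
        (congrArg norm he).symm.trans_le (norm_sub_le f (f - f₀))
      rw [hnf₀] at this; linarith
    have hTball : ∀ f : ℂ × ℂ, ‖f‖ < 1 → myT f = (-f.1, f.2) := fun f hf => if_pos hf
    have hTout : ∀ f : ℂ × ℂ, ¬ ‖f‖ < 1 → myT f = f := fun f hf => if_neg hf
    have hnormflip : ∀ f : ℂ × ℂ, ‖((-f.1, f.2) : ℂ × ℂ)‖ = ‖f‖ := by
      intro f; rw [mynorm_mk, norm_neg, mynorm_prod]
    have hmem₂ : ∀ b : ℂ × ℂ, ‖b - f₀‖ < 1 → ‖b.1‖ < 1 ∧ ‖b.2 - 10‖ < 1 := by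
      intro b hb
      have h1 : ‖(b - f₀).1‖ ≤ ‖b - f₀‖ := le_max_left _ _
      have h2 : ‖(b - f₀).2‖ ≤ ‖b - f₀‖ := le_max_right _ _
      simp only [hf₀, Prod.fst_sub, Prod.snd_sub, sub_zero] at h1 h2
      exact ⟨lt_of_le_of_lt h1 hb, lt_of_le_of_lt h2 hb⟩
    have hkey : ∀ a b : ℂ × ℂ, ‖a‖ < 1 → ‖b - f₀‖ < 1 →
        ‖a.1 - b.1‖ ≤ ‖a.2 - b.2‖ ∧ ‖-a.1 - b.1‖ ≤ ‖a.2 - b.2‖ := by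
      intro a b ha hb
      obtain ⟨hb1, hb2⟩ := hmem₂ b hb
      have ha1 : ‖a.1‖ < 1 := lt_of_le_of_lt (le_max_left _ _) ha
      have ha2 : ‖a.2‖ < 1 := lt_of_le_of_lt (le_max_right _ _) ha
      have h10 : ‖(10 : ℂ)‖ = 10 := by simp
      have he : a.2 - (a.2 - b.2) - (b.2 - 10) = 10 := by ring
      have key : (8 : ℝ) ≤ ‖a.2 - b.2‖ := by
        have h1 : ‖(10 : ℂ)‖ ≤ ‖a.2 - (a.2 - b.2)‖ + ‖b.2 - 10‖ :=
          (congrArg norm he).symm.trans_le (norm_sub_le _ _)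
        have h2 : ‖a.2 - (a.2 - b.2)‖ ≤ ‖a.2‖ + ‖a.2 - b.2‖ := norm_sub_le _ _
        rw [h10] at h1; linarith
      constructor
      · calc ‖a.1 - b.1‖ ≤ ‖a.1‖ + ‖b.1‖ := norm_sub_le _ _
        _ ≤ ‖a.2 - b.2‖ := by linarith
      · calc ‖-a.1 - b.1‖ ≤ ‖-a.1‖ + ‖b.1‖ := norm_sub_le _ _
        _ ≤ ‖a.2 - b.2‖ := by rw [norm_neg]; linarith
  · -- MapsTo
    intro f hf
    rcases hf with hf | hf
    · left
      rw [Set.mem_setOf_eq, hTball f hf, hnormflip]; exact hf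
    · right; rw [hTout f (hdisj f hf)]; exact hf
  · -- SurjOn
    intro f hf
    rcases hf with hf | hf
    · refine ⟨(-f.1, f.2), Or.inl ?_, ?_⟩
      · show ‖((-f.1, f.2) : ℂ × ℂ)‖ < 1
        rw [hnormflip]; exact hf
      · rw [hTball _ (by rw [hnormflip]; exact hf)]; simp
    · exact ⟨f, Or.inr hf, hTout f (hdisj f hf)⟩
  · -- isometry
    intro a ha b hb
    rcases ha with ha | ha <;> rcases hb with hb | hb
    · rw [hTball a ha, hTball b hb]
      have he : (-a.1, a.2) - (-b.1, b.2) = ((-(a.1 - b.1), a.2 - b.2) : ℂ × ℂ) := by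
        simp [Prod.ext_iff]; ring
      rw [he, mynorm_mk, norm_neg, mynorm_prod]
      simp [Prod.fst_sub, Prod.snd_sub]
    · rw [hTball a ha, hTout b (hdisj b hb)]
      obtain ⟨k1, k2⟩ := hkey a b ha hb
      have he : (-a.1, a.2) - b = ((-a.1 - b.1, a.2 - b.2) : ℂ × ℂ) := by
        simp [Prod.ext_iff]
      rw [he, mynorm_mk, mynorm_prod]
      simp only [Prod.fst_sub, Prod.snd_sub]
      rw [max_eq_right k2, max_eq_right k1]
    · rw [hTout a (hdisj a ha), hTball b hb]
      obtain ⟨k1, k2⟩ := hkey b a hb ha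
      have he : a - (-b.1, b.2) = ((a.1 + b.1, a.2 - b.2) : ℂ × ℂ) := by
        simp [Prod.ext_iff]
      rw [he, mynorm_mk, mynorm_prod]
      simp only [Prod.fst_sub, Prod.snd_sub]
      have e1 : ‖a.1 + b.1‖ = ‖-b.1 - a.1‖ := by rw [← norm_neg]; ring_nf
      have e2 : ‖a.2 - b.2‖ = ‖b.2 - a.2‖ := norm_sub_rev _ _
      have e3 : ‖a.1 - b.1‖ = ‖b.1 - a.1‖ := norm_sub_rev _ _
      rw [e1, e2, e3, max_eq_right k2, max_eq_right k1]
    · rw [hTout a (hdisj a ha), hTout b (hdisj b hb)]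
  · -- no extension
    rintro ⟨S, v, _, hTv⟩
    have h0U : (0 : ℂ × ℂ) ∈ {f : ℂ × ℂ | ‖f‖ < 1} ∪ {f | ‖f - f₀‖ < 1} := by
      left; simp
    have hT0 : myT 0 = 0 := by
      rw [hTball 0 (by simp)]; simp
    have hv : v = 0 := by
      have := hTv 0 h0U
      rw [hT0, map_zero, zero_add] at this; exact this.symm
    have hf₀U : f₀ ∈ {f : ℂ × ℂ | ‖f‖ < 1} ∪ {f | ‖f - f₀‖ < 1} := by
      right; simp
    have hSf₀ : S f₀ = f₀ := by
      have := hTv f₀ hf₀U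
      rw [hTout f₀ (hdisj f₀ (by simp [hnf₀])), hv, add_zero] at this
      exact this.symm
    set x : ℂ × ℂ := ((1/2 : ℂ), 0) with hx
    have hnx : ‖x‖ = 1/2 := by
      rw [hx, mynorm_mk]; simp
    have hfx : ‖f₀ + x - f₀‖ < 1 := by
      rw [add_sub_cancel_left, hnx]; norm_num
    have hxU : (f₀ + x) ∈ {f : ℂ × ℂ | ‖f‖ < 1} ∪ {f | ‖f - f₀‖ < 1} :=
      Or.inr hfx
    have hSfx : S (f₀ + x) = f₀ + x := by
      have := hTv (f₀ + x) hxU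
      rw [hTout (f₀ + x) (hdisj (f₀ + x) hfx), hv, add_zero] at this
      exact this.symm
    have hSx : S x = x := by
      have h := hSfx
      rw [map_add, hSf₀] at h
      exact add_left_cancel h
    have hxU' : x ∈ {f : ℂ × ℂ | ‖f‖ < 1} ∪ {f | ‖f - f₀‖ < 1} := by
      left; show ‖x‖ < 1; rw [hnx]; norm_num
    have hfin := hTv x hxU'
    rw [hTball x (by rw [hnx]; norm_num), hv, add_zero, hSx] at hfin
    have h1 : (-(1/2 : ℂ)) = 1/2 := by
      have := congrArg Prod.fst hfin
      simpa [hx] using this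
    norm_num at h1
end
end

section
/- Let B be a unital complex Banach algebra and let a ∈ B. Suppose that the spectral radius r(ba) = 0 for every b in the principal component B⁻¹ₑ of the invertible group of B. Then a belongs to the Jacobson radical rad(B). -/
open Set

section Aux

variable {B : Type*} [NormedRing B] [NormedAlgebra ℂ B] [CompleteSpace B]

set_option linter.unusedSectionVars false

/-- If the spectral radius of `x` is zero, then `1 + z • x` is a unit for every scalar. -/
lemma isUnit_one_add_smul_of_spectralRadius_eq_zero {x : B}
    (hx : spectralRadius ℂ x = 0) (z : ℂ) : IsUnit (1 + z • x) := by
  rcases eq_or_ne z 0 with rfl | hz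
  · simp
  · have hk : (-z⁻¹ : ℂ) ≠ 0 := by simp [hz]
    have hmem : (-z⁻¹ : ℂ) ∈ resolventSet ℂ x := by
      apply spectrum.mem_resolventSet_of_spectralRadius_lt
      rw [hx]
      simpa using hk
    have hunit : IsUnit (algebraMap ℂ B (-z⁻¹) - x) :=
      spectrum.mem_resolventSet_iff.mp hmem
    have key : 1 + z • x = (algebraMap ℂ B (-z)) * (algebraMap ℂ B (-z⁻¹) - x) := by
      rw [Algebra.algebraMap_eq_smul_one (-z), Algebra.algebraMap_eq_smul_one (-z⁻¹),
        smul_mul_assoc, one_mul, smul_sub, smul_smul]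
      rw [show (-z) * (-z⁻¹) = 1 by field_simp]
      simp [neg_smul, sub_neg_eq_add]
    rw [key]
    exact ((isUnit_iff_ne_zero.mpr (neg_ne_zero.mpr hz)).map (algebraMap ℂ B)).mul hunit

/-- Membership in the principal component via a path of units defined on `[0,1]`. -/
lemma mem_principalComponent_of_path {f : ℝ → B} (hf : Continuous f)
    (h0 : f 0 = 1) (hu : ∀ t ∈ Icc (0:ℝ) 1, IsUnit (f t)) :
    f 1 ∈ connectedComponentIn {x : B | IsUnit x} 1 := by
  have hpre : IsPreconnected (f '' Icc (0:ℝ) 1) :=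
    (isPreconnected_Icc).image f hf.continuousOn
  have hsub : f '' Icc (0:ℝ) 1 ⊆ {x : B | IsUnit x} := by
    rintro _ ⟨t, ht, rfl⟩; exact hu t ht
  have h1mem : (1 : B) ∈ f '' Icc (0:ℝ) 1 :=
    ⟨0, by simp, h0⟩
  exact (hpre.subset_connectedComponentIn h1mem hsub)
    ⟨1, by simp, rfl⟩

/-- The principal component of the units is closed under multiplication. -/
lemma mem_principalComponent_mul {x y : B}
    (hx : x ∈ connectedComponentIn {x : B | IsUnit x} 1)
    (hy : y ∈ connectedComponentIn {x : B | IsUnit x} 1) :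
    x * y ∈ connectedComponentIn {x : B | IsUnit x} 1 := by
  set U : Set B := {x : B | IsUnit x}
  have hxU : IsUnit x := connectedComponentIn_subset U 1 hx
  have hpre : IsPreconnected ((fun z => x * z) '' connectedComponentIn U 1) :=
    isPreconnected_connectedComponentIn.image _ (by fun_prop)
  have hsub : (fun z => x * z) '' connectedComponentIn U 1 ⊆ U := by
    rintro _ ⟨z, hz, rfl⟩
    exact hxU.mul (connectedComponentIn_subset U 1 hz)
  have hxmem : x ∈ (fun z => x * z) '' connectedComponentIn U 1 :=
    ⟨1, mem_connectedComponentIn isUnit_one, mul_one x⟩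
  have : (fun z => x * z) '' connectedComponentIn U 1 ⊆ connectedComponentIn U x :=
    hpre.subset_connectedComponentIn hxmem hsub
  have hxy : x * y ∈ connectedComponentIn U x := this ⟨y, hy, rfl⟩
  rwa [connectedComponentIn_eq hx]

/-- The principal component of the units is closed under `Ring.inverse`. -/
lemma mem_principalComponent_inverse {x : B}
    (hx : x ∈ connectedComponentIn {x : B | IsUnit x} 1) :
    Ring.inverse x ∈ connectedComponentIn {x : B | IsUnit x} 1 := by
  set U : Set B := {x : B | IsUnit x}
  have hcont : ContinuousOn (Ring.inverse : B → B) (connectedComponentIn U 1) := by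
    intro z hz
    obtain ⟨u, rfl⟩ := connectedComponentIn_subset U 1 hz
    exact (NormedRing.inverse_continuousAt u).continuousWithinAt
  have hpre : IsPreconnected (Ring.inverse '' connectedComponentIn U 1) :=
    isPreconnected_connectedComponentIn.image _ hcont
  have hsub : Ring.inverse '' connectedComponentIn U 1 ⊆ U := by
    rintro _ ⟨z, hz, rfl⟩
    obtain ⟨u, rfl⟩ := connectedComponentIn_subset U 1 hz
    rw [Ring.inverse_unit]
    exact (u⁻¹).isUnit
  have h1mem : (1 : B) ∈ Ring.inverse '' connectedComponentIn U 1 :=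
    ⟨1, mem_connectedComponentIn isUnit_one, Ring.inverse_one B⟩
  exact (hpre.subset_connectedComponentIn h1mem hsub) ⟨x, hx, rfl⟩

end Aux

/-- Lemma 3.1: if `a` is an element of a unital complex Banach algebra `B` such
that `r(b * a) = 0` for every `b` in the principal component of the group of
invertible elements (the connected component of the identity in the set of
units), then `a` lies in the Jacobson radical of `B`. -/
theorem mem_jacobson_of_spectralRadius_eq_zero
    {B : Type*} [NormedRing B] [NormedAlgebra ℂ B] [CompleteSpace B]
    (a : B)
    (h : ∀ b ∈ connectedComponentIn {x : B | IsUnit x} 1,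
        spectralRadius ℂ (b * a) = 0) :
    a ∈ Ideal.jacobson (⊥ : Ideal B) := by
  set U : Set B := {x : B | IsUnit x} with hU
  set C := connectedComponentIn U 1 with hC
  have h1C : (1 : B) ∈ C := mem_connectedComponentIn isUnit_one
  have hra : spectralRadius ℂ a = 0 := by simpa using h 1 h1C
  -- Main claim: `1 + b * a` is a unit for every `b : B`.
  have key : ∀ b : B, IsUnit (1 + b * a) := by
    intro b
    set μ : ℝ := ‖b‖ + 1 with hμ
    have hμpos : (0:ℝ) < μ := by positivity
    -- `μ • 1 ∈ C`
    have hμC : ((μ:ℂ) • (1:B)) ∈ C := by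
      have := mem_principalComponent_of_path (B := B)
        (f := fun t : ℝ => ((1 + t * (μ - 1) : ℝ) : ℂ) • (1:B)) (by fun_prop)
        (by norm_num)
        (fun t ht => by
          have hpos : (0:ℝ) < 1 + t * (μ - 1) := by
            rcases ht with ⟨ht0, ht1⟩
            have := norm_nonneg b
            have hμ1 : μ - 1 = ‖b‖ := by simp [hμ]
            nlinarith
          have hne : ((1 + t * (μ - 1) : ℝ) : ℂ) ≠ 0 := by
            exact_mod_cast hpos.ne'
          show IsUnit (((1 + t * (μ - 1) : ℝ) : ℂ) • (1:B))
          rw [← Algebra.algebraMap_eq_smul_one]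
          exact (isUnit_iff_ne_zero.mpr hne).map (algebraMap ℂ B))
      simpa using this
    -- `1 + μ⁻¹ • b ∈ C`
    have hbC : (1 + ((μ:ℂ))⁻¹ • b) ∈ C := by
      have := mem_principalComponent_of_path (B := B)
        (f := fun t : ℝ => 1 + ((t : ℂ) * ((μ:ℂ))⁻¹) • b) (by fun_prop)
        (by norm_num)
        (fun t ht => by
          have hnorm : ‖-(((t:ℂ) * ((μ:ℂ))⁻¹) • b)‖ < 1 := by
            rw [norm_neg, norm_smul]
            have : ‖(t:ℂ) * ((μ:ℂ))⁻¹‖ = t * μ⁻¹ := by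
              rcases ht with ⟨ht0, _⟩
              rw [norm_mul, norm_inv]
              simp [Complex.norm_real, abs_of_nonneg ht0, abs_of_pos hμpos,
                Real.norm_eq_abs]
            rw [this]
            rcases ht with ⟨ht0, ht1⟩
            have hb1 : ‖b‖ < μ := by simp [hμ]
            have hμinv : (0:ℝ) < μ⁻¹ := by positivity
            calc t * μ⁻¹ * ‖b‖ ≤ 1 * μ⁻¹ * ‖b‖ := by
                  apply mul_le_mul_of_nonneg_right _ (norm_nonneg b)
                  apply mul_le_mul_of_nonneg_right ht1 hμinv.le
              _ = μ⁻¹ * ‖b‖ := by ring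
              _ < μ⁻¹ * μ := by
                  exact mul_lt_mul_of_pos_left hb1 hμinv
              _ = 1 := by field_simp
          have : IsUnit (1 - -(((t : ℂ) * ((μ:ℂ))⁻¹) • b)) :=
            isUnit_one_sub_of_norm_lt_one hnorm
          simpa [sub_neg_eq_add] using this)
      simpa using this
    -- `b + μ • 1 ∈ C`
    have hsumC : (b + (μ:ℂ) • (1:B)) ∈ C := by
      have := mem_principalComponent_mul hμC hbC
      have heq : ((μ:ℂ) • (1:B)) * (1 + ((μ:ℂ))⁻¹ • b) = b + (μ:ℂ) • (1:B) := by
        have hμne : ((μ:ℂ)) ≠ 0 := by exact_mod_cast hμpos.ne'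
        rw [mul_add, mul_one, smul_mul_assoc, one_mul, smul_smul,
          mul_inv_cancel₀ hμne, one_smul, add_comm]
      rwa [heq] at this
    -- `v := 1 - μ • a` is a unit lying in `C`
    set v : B := 1 + (-(μ:ℂ)) • a with hv
    have hvunit : IsUnit v := isUnit_one_add_smul_of_spectralRadius_eq_zero hra _
    have hvC : v ∈ C := by
      have := mem_principalComponent_of_path (B := B)
        (f := fun t : ℝ => 1 + ((t:ℂ) * (-(μ:ℂ))) • a) (by fun_prop)
        (by norm_num)
        (fun t _ => isUnit_one_add_smul_of_spectralRadius_eq_zero hra _)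
      rw [hv, neg_smul]
      simpa [neg_smul] using this
    -- the element `u := v⁻¹ * (b + μ • 1)` lies in `C`
    set u : B := Ring.inverse v * (b + (μ:ℂ) • (1:B)) with hu2
    have huC : u ∈ C := mem_principalComponent_mul (mem_principalComponent_inverse hvC) hsumC
    -- hence `1 + u * a` is a unit
    have hua : IsUnit (1 + u * a) := by
      have := isUnit_one_add_smul_of_spectralRadius_eq_zero (h u huC) 1
      simpa using this
    -- and `1 + b * a = v * (1 + u * a)`
    have factor : v * (1 + u * a) = 1 + b * a := by
      have hvv : v * Ring.inverse v = 1 := Ring.mul_inverse_cancel v hvunit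
      have h1 : v * (1 + u * a) = v + (v * Ring.inverse v) * ((b + (μ:ℂ) • (1:B)) * a) := by
        rw [hu2]; noncomm_ring
      rw [h1, hvv, one_mul, hv, add_mul, smul_mul_assoc, one_mul, neg_smul]
      abel
    rw [← factor]
    exact hvunit.mul hua
  -- conclude membership in every maximal left ideal
  rw [Ideal.jacobson, Submodule.mem_sInf]
  rintro M ⟨-, hM⟩
  by_contra haM
  have hsup : M ⊔ Ideal.span {a} = ⊤ := by
    rcases hM with ⟨hMne, hMmax⟩
    apply hMmax
    refine lt_of_le_of_ne le_sup_left ?_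
    intro hEq
    exact haM (hEq ▸ (le_sup_right : Ideal.span {a} ≤ M ⊔ Ideal.span {a})
      (Ideal.subset_span rfl))
  have h1 : (1 : B) ∈ M ⊔ Ideal.span {a} := hsup ▸ Submodule.mem_top
  rcases Submodule.mem_sup.mp h1 with ⟨m, hm, z, hz, hmz⟩
  rcases Submodule.mem_span_singleton.mp hz with ⟨c, rfl⟩
  have hmu : IsUnit m := by
    have hm1 : m = 1 - c • a := by rw [← hmz]; abel
    have : m = 1 + (-c) * a := by
      rw [hm1, smul_eq_mul, neg_mul, ← sub_eq_add_neg]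
    rw [this]
    exact key (-c)
  exact (Ideal.IsMaximal.ne_top hM) (Ideal.eq_top_of_isUnit_mem M hm hmu)
end

section
/- Let A and B be unital complex Banach algebras, let 𝔄 and 𝔅 be open subgroups of A⁻¹ and B⁻¹ respectively, and let T : 𝔄 → 𝔅 be a surjective isometry. Then there exists u₀ ∈ rad(B) such that T(a) converges to u₀ as a tends to 0 along 𝔄; that is, the limit lim_{𝔄 ∋ a → 0} T(a) exists and lies in the Jacobson radical of B. -/
/-!
Open subgroups of `A⁻¹` are closed in `A⁻¹`, so they contain every connected set of units
through `1`: all nonzero multiples of `1` and the ball `‖x - 1‖ < 1`. Hence `0 ∈ closure 𝔄`, and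
the uniformly continuous `T` has a limit `u₀` at `0`.

A local Mazur–Ulam theorem shows that `T` preserves midpoints near every point of `𝔄`. By
completeness `T` maps small balls onto balls, and inside them Väisälä's argument applies:
composing `T`, its inverse and the point reflections through `z = midpoint x y` and through
`midpoint (T x) (T y)` gives an isometry fixing `x` and `y` that moves `z` by
`2 ‖midpoint (T x) (T y) - T z‖`, and conjugating by the reflection through `z` doubles this
displacement, which is bounded by `2 ‖x - z‖`. So `t ↦ T (t • x)` is affine on `t > 0`, and
letting `t → 0` gives `2 • T ((1 / 2) • x) = u₀ + T x`, that is, `u₀ + 𝔅 ⊆ 𝔅`. Then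
`b * u₀ + c ∈ 𝔅` for `b, c ∈ 𝔅`; as every element of `B` is a sum of two elements of `𝔅`,
`y * u₀ + 1` is invertible for every `y`, so `u₀` lies in the Jacobson radical.
-/

open Metric Set Filter Topology

structure IsOpenUnitSubgroup {R : Type*} [Ring R] [TopologicalSpace R] (G : Set R) : Prop where
  isUnit : ∀ a ∈ G, IsUnit a
  one_mem : (1 : R) ∈ G
  mul_mem : ∀ a ∈ G, ∀ b ∈ G, a * b ∈ G
  inverse_mem : ∀ a ∈ G, Ring.inverse a ∈ G
  isOpen : IsOpen G

namespace IsOpenUnitSubgroup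

section Topological

variable {R : Type*} [Ring R] [TopologicalSpace R] [ContinuousMul R] {G : Set R}

theorem isOpen_setOf_isUnit_and_notMem (hG : IsOpenUnitSubgroup G) :
    IsOpen {x : R | IsUnit x ∧ x ∉ G} := by
  refine isOpen_iff_mem_nhds.2 ?_
  rintro _ ⟨⟨u, rfl⟩, hu⟩
  have hnhds : {y : R | ↑u⁻¹ * y ∈ G} ∈ 𝓝 (u : R) :=
    (continuous_const.mul continuous_id).continuousAt.preimage_mem_nhds
      (hG.isOpen.mem_nhds (by simpa using hG.one_mem))
  refine mem_of_superset hnhds fun y hy => ?_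
  obtain ⟨v, hv⟩ := hG.isUnit _ hy
  have hy' : y = u * v := by rw [hv, Units.mul_inv_cancel_left]
  refine ⟨hy' ▸ (u * v).isUnit, fun hyG => hu ?_⟩
  have := hG.mul_mem _ hyG _ (hG.inverse_mem _ hy)
  rwa [← hv, Ring.inverse_unit, hy', Units.mul_inv_cancel_right] at this

theorem subset_of_isPreconnected (hG : IsOpenUnitSubgroup G) {K : Set R} (hK : IsPreconnected K)
    (hKunit : ∀ x ∈ K, IsUnit x) (h1 : (1 : R) ∈ K) : K ⊆ G := by
  refine hK.subset_left_of_subset_union hG.isOpen hG.isOpen_setOf_isUnit_and_notMem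
    (disjoint_left.2 fun x hx hx' => hx'.2 hx) (fun x hx => ?_) ⟨1, h1, hG.one_mem⟩
  by_cases hxG : x ∈ G
  · exact Or.inl hxG
  · exact Or.inr ⟨hKunit x hx, hxG⟩

end Topological

variable {R : Type*} [NormedRing R] [NormedAlgebra ℂ R] {G : Set R}

theorem smul_one_mem (hG : IsOpenUnitSubgroup G) {c : ℂ} (hc : c ≠ 0) : c • (1 : R) ∈ G := by
  have hK : IsPreconnected ((fun c : ℂ => c • (1 : R)) '' {0}ᶜ) :=
    (isConnected_compl_singleton_of_one_lt_rank (by simp [Complex.rank_real_complex]) 0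
      ).isPreconnected.image _ (by fun_prop)
  refine hG.subset_of_isPreconnected hK ?_ ⟨1, one_ne_zero, one_smul ℂ 1⟩ ⟨c, hc, rfl⟩
  rintro _ ⟨c, hc, rfl⟩
  show IsUnit (c • (1 : R))
  rw [← Algebra.algebraMap_eq_smul_one c]
  exact (isUnit_iff_ne_zero.2 hc).map _

theorem smul_mem (hG : IsOpenUnitSubgroup G) {c : ℂ} (hc : c ≠ 0) {b : R} (hb : b ∈ G) :
    c • b ∈ G := by
  simpa only [smul_one_mul] using hG.mul_mem _ (hG.smul_one_mem hc) _ hb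

theorem real_smul_mem (hG : IsOpenUnitSubgroup G) {t : ℝ} (ht : t ≠ 0) {b : R} (hb : b ∈ G) :
    t • b ∈ G := by
  simpa only [Complex.coe_smul] using hG.smul_mem (Complex.ofReal_ne_zero.2 ht) hb

theorem zero_mem_closure (hG : IsOpenUnitSubgroup G) : (0 : R) ∈ closure G := by
  have h : Tendsto (fun c : ℂ => c • (1 : R)) (𝓝[≠] 0) (𝓝 0) :=
    ((continuous_id.smul continuous_const).tendsto' 0 0 (zero_smul ℂ 1)).mono_left
      nhdsWithin_le_nhds
  exact mem_closure_of_tendsto h (eventually_nhdsWithin_of_forall fun c hc => hG.smul_one_mem hc)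

theorem ball_one_subset [CompleteSpace R] (hG : IsOpenUnitSubgroup G) : ball (1 : R) 1 ⊆ G := by
  refine hG.subset_of_isPreconnected isPreconnected_ball (fun x hx => ?_) (mem_ball_self one_pos)
  rw [mem_ball, dist_eq_norm, norm_sub_rev] at hx
  simpa using (Units.oneSub (1 - x) hx).isUnit

theorem exists_add_eq [CompleteSpace R] (hG : IsOpenUnitSubgroup G) (y : R) :
    ∃ b₁ ∈ G, ∃ b₂ ∈ G, b₁ + b₂ = y := by
  set t : ℂ := ((‖y‖ + 1 : ℝ) : ℂ)
  have ht : t ≠ 0 := Complex.ofReal_ne_zero.2 (by positivity)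
  have hsmall : 1 + t⁻¹ • y ∈ ball (1 : R) 1 := by
    rw [mem_ball, dist_eq_norm, add_sub_cancel_left, norm_smul, norm_inv, Complex.norm_real,
      Real.norm_of_nonneg (by positivity), inv_mul_lt_one₀ (by positivity)]
    linarith
  refine ⟨t • (1 + t⁻¹ • y), hG.smul_mem ht (hG.ball_one_subset hsmall), (-t) • 1,
    hG.smul_one_mem (neg_ne_zero.2 ht), ?_⟩
  rw [smul_add, smul_smul, mul_inv_cancel₀ ht, one_smul, neg_smul]
  abel

theorem mem_jacobson_bot_of_add_mem [CompleteSpace R] (hG : IsOpenUnitSubgroup G) {u : R}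
    (hu : ∀ c ∈ G, u + c ∈ G) : u ∈ Ideal.jacobson ⊥ := by
  have hmul : ∀ b ∈ G, ∀ c ∈ G, b * u + c ∈ G := fun b hb c hc => by
    have := hG.mul_mem _ hb _ (hu _ (hG.mul_mem _ (hG.inverse_mem _ hb) _ hc))
    rwa [mul_add, ← mul_assoc, Ring.mul_inverse_cancel _ (hG.isUnit _ hb), one_mul] at this
  refine Ideal.mem_jacobson_iff.2 fun y => ?_
  obtain ⟨b₁, hb₁, b₂, hb₂, rfl⟩ := hG.exists_add_eq y
  obtain ⟨v, hv⟩ := hG.isUnit _ (hmul _ hb₁ _ (hmul _ hb₂ _ hG.one_mem))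
  refine ⟨↑v⁻¹, (Ideal.mem_bot).2 ?_⟩
  calc ↑v⁻¹ * (b₁ + b₂) * u + ↑v⁻¹ - 1 = ↑v⁻¹ * (b₁ * u + (b₂ * u + 1)) - 1 := by noncomm_ring
    _ = 0 := by rw [← hv, Units.inv_mul, sub_self]

end IsOpenUnitSubgroup

section ImageBall

variable {X F : Type*} [PseudoMetricSpace X] {s : Set X} {T : X → F} {a : X} {r : ℝ}

theorem isOpen_image_ball [PseudoMetricSpace F]
    (hT : ∀ x ∈ s, ∀ y ∈ s, dist (T x) (T y) = dist x y) (hs : IsOpen (T '' s))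
    (har : ball a r ⊆ s) : IsOpen (T '' ball a r) := by
  refine Metric.isOpen_iff.2 ?_
  rintro _ ⟨w, hw, rfl⟩
  obtain ⟨ε, hε, hεs⟩ := Metric.isOpen_iff.1 hs (T w) ⟨w, har hw, rfl⟩
  refine ⟨min ε (r - dist w a), lt_min hε (sub_pos.2 hw), fun v hv => ?_⟩
  obtain ⟨w', hw's, rfl⟩ := hεs (ball_subset_ball (min_le_left _ _) hv)
  have hw' : dist w' w < min ε (r - dist w a) := by rw [← hT w' hw's w (har hw)]; exact hv
  refine ⟨w', ?_, rfl⟩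
  calc dist w' a ≤ dist w' w + dist w a := dist_triangle _ _ _
    _ < r := by linarith [min_le_right ε (r - dist w a)]

theorem mem_image_ball_of_mem_closure [CompleteSpace X] [MetricSpace F]
    (hT : ∀ x ∈ s, ∀ y ∈ s, dist (T x) (T y) = dist x y) (har : ball a r ⊆ s) {v : F}
    (hv : v ∈ closure (T '' ball a r)) (hvr : dist v (T a) < r) : v ∈ T '' ball a r := by
  obtain ⟨vs, hvs, hlim⟩ := mem_closure_iff_seq_limit.1 hv
  choose ws hws hTws using hvs
  have hdist : ∀ m n, dist (ws m) (ws n) = dist (vs m) (vs n) := fun m n => by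
    rw [← hTws, ← hTws, hT _ (har (hws m)) _ (har (hws n))]
  have hcauchy : CauchySeq ws := Metric.cauchySeq_iff.2 fun ε hε => by
    simpa only [hdist] using Metric.cauchySeq_iff.1 hlim.cauchySeq ε hε
  obtain ⟨w, hw⟩ := cauchySeq_tendsto_of_complete hcauchy
  have hr : 0 < r := dist_nonneg.trans_lt hvr
  have hwa : dist w a = dist v (T a) := by
    refine tendsto_nhds_unique (hw.dist tendsto_const_nhds) ?_
    have hda : ∀ n, dist (ws n) a = dist (vs n) (T a) := fun n => by
      rw [← hTws, hT _ (har (hws n)) _ (har (mem_ball_self hr))]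
    simpa only [hda] using hlim.dist (tendsto_const_nhds (x := T a))
  have hwr : w ∈ ball a r := by rwa [mem_ball, hwa]
  refine ⟨w, hwr, tendsto_nhds_unique ?_ hlim⟩
  have hdw : ∀ n, dist (vs n) (T w) = dist (ws n) w := fun n => by
    rw [← hTws, hT _ (har (hws n)) _ (har hwr)]
  refine tendsto_iff_dist_tendsto_zero.2 ?_
  simpa only [hdw] using tendsto_iff_dist_tendsto_zero.1 hw

theorem surjOn_ball_of_isOpen_image [CompleteSpace X] [NormedAddCommGroup F] [NormedSpace ℝ F]
    (hT : ∀ x ∈ s, ∀ y ∈ s, dist (T x) (T y) = dist x y) (hs : IsOpen (T '' s))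
    (har : ball a r ⊆ s) : SurjOn T (ball a r) (ball (T a) r) := by
  rcases le_or_gt r 0 with hr | hr
  · simp [ball_eq_empty.2 hr]
  exact isPreconnected_ball.subset_of_closure_inter_subset (isOpen_image_ball hT hs har)
    ⟨T a, mem_ball_self hr, a, mem_ball_self hr, rfl⟩
    fun v hv => mem_image_ball_of_mem_closure hT har hv.1 hv.2

end ImageBall

section LocalMazurUlam

open AffineIsometryEquiv

variable {E F : Type*} [NormedAddCommGroup E] [NormedSpace ℝ E]
  [NormedAddCommGroup F] [NormedSpace ℝ F]

/-- The maps of Väisälä's proof of the Mazur–Ulam theorem, restricted to `ball z r`. -/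
structure LocalIsometryPair (z x : E) (r : ℝ) (g h : E → E) : Prop where
  dist_left : ∀ w ∈ ball z r, ∀ w' ∈ ball z r, dist (g w) (g w') = dist w w'
  dist_right : ∀ w ∈ ball z r, ∀ w' ∈ ball z r, dist (h w) (h w') = dist w w'
  invOn : InvOn h g (ball z r) (ball z r)
  map_left : g x = x
  map_reflection : g (pointReflection ℝ z x) = pointReflection ℝ z x

theorem pointReflection_mem_ball {z w : E} {r : ℝ} :
    pointReflection ℝ z w ∈ ball z r ↔ w ∈ ball z r := by
  simp only [mem_ball, dist_pointReflection_fixed]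

namespace LocalIsometryPair

variable {z x : E} {r : ℝ} {g h : E → E}

theorem dist_apply_self_le (P : LocalIsometryPair z x r g h) (hx : dist x z < r) :
    dist (g z) z ≤ 2 * dist x z := by
  have hz : z ∈ ball z r := mem_ball_self (dist_nonneg.trans_lt hx)
  calc dist (g z) z ≤ dist (g z) (g x) + dist x z := by rw [P.map_left]; exact dist_triangle _ _ _
    _ = 2 * dist x z := by rw [P.dist_left z hz x hx, dist_comm]; ring

theorem mapsTo_ball (P : LocalIsometryPair z x r g h) (hc : dist (g z) z < r) :
    MapsTo g (ball z (r - dist (g z) z)) (ball z r) := by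
  intro w hw
  rw [mem_ball] at hw ⊢
  have hz : z ∈ ball z r := mem_ball_self (dist_nonneg.trans_lt hc)
  have hw' : w ∈ ball z r := by rw [mem_ball]; linarith [dist_nonneg (x := g z) (y := z)]
  calc dist (g w) z ≤ dist (g w) (g z) + dist (g z) z := dist_triangle _ _ _
    _ = dist w z + dist (g z) z := by rw [P.dist_left w hw' z hz]
    _ < r := by linarith

theorem double (P : LocalIsometryPair z x r g h) (hc : dist (g z) z < r) (hx : dist x z < r) :
    LocalIsometryPair z x (r - dist (g z) z)
      (fun w => pointReflection ℝ z (h (pointReflection ℝ z (g w))))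
      (fun w => h (pointReflection ℝ z (g (pointReflection ℝ z w)))) := by
  set σ := pointReflection ℝ z
  have hσσ : ∀ w, σ (σ w) = w := pointReflection_involutive (𝕜 := ℝ) z
  have hsub : ball z (r - dist (g z) z) ⊆ ball z r := ball_subset_ball (by simp)
  have hg : ∀ w ∈ ball z (r - dist (g z) z), σ (g w) ∈ ball z r := fun w hw =>
    pointReflection_mem_ball.2 (P.mapsTo_ball hc hw)
  have hσsub : ∀ w ∈ ball z (r - dist (g z) z), σ w ∈ ball z r := fun w hw =>
    hsub (pointReflection_mem_ball.2 hw)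
  have hg' : ∀ w ∈ ball z (r - dist (g z) z), σ (g (σ w)) ∈ ball z r := fun w hw =>
    hg _ (pointReflection_mem_ball.2 hw)
  have hx' : x ∈ ball z r := hx
  have hy : σ x ∈ ball z r := pointReflection_mem_ball.2 hx
  have hfix : g (σ x) = σ x := P.map_reflection
  refine ⟨fun w hw w' hw' => ?_, fun w hw w' hw' => ?_, ⟨fun w hw => ?_, fun w hw => ?_⟩, ?_, ?_⟩
  · rw [σ.dist_map, P.dist_right _ (hg w hw) _ (hg w' hw'), σ.dist_map,
      P.dist_left _ (hsub hw) _ (hsub hw')]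
  · rw [P.dist_right _ (hg' w hw) _ (hg' w' hw'), σ.dist_map,
      P.dist_left _ (hσsub w hw) _ (hσsub w' hw'), σ.dist_map]
  · dsimp only
    rw [hσσ, P.invOn.2 (hg w hw), hσσ, P.invOn.1 (hsub hw)]
  · dsimp only
    rw [P.invOn.2 (hg' w hw), hσσ, P.invOn.1 (hσsub w hw), hσσ]
  · rw [P.map_left, ← hfix, P.invOn.1 hy, hσσ]
  · rw [hfix, hσσ, ← P.map_left, P.invOn.1 hx', P.map_left]

theorem dist_double_apply_self (P : LocalIsometryPair z x r g h) (hc : dist (g z) z < r) :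
    dist (pointReflection ℝ z (h (pointReflection ℝ z (g z)))) z = 2 * dist (g z) z := by
  have hz : z ∈ ball z r := mem_ball_self (dist_nonneg.trans_lt hc)
  have hgz : g z ∈ ball z r := hc
  calc dist (pointReflection ℝ z (h (pointReflection ℝ z (g z)))) z
      = dist (h (pointReflection ℝ z (g z))) (h (g z)) := by
        rw [dist_pointReflection_fixed, P.invOn.1 hz]
    _ = 2 * dist (g z) z := by
        rw [P.dist_right _ (pointReflection_mem_ball.2 hgz) _ hgz, dist_pointReflection_self_real,
          dist_comm]

theorem apply_self_eq (P : LocalIsometryPair z x r g h) (hr : 5 * dist x z < r) : g z = z := by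
  -- the displacements `2 ^ k * dist (g z) z` stay below `2 * dist x z`, so the radii shrink by
  -- at most `4 * dist x z` in total
  have hδ : 0 ≤ dist x z := dist_nonneg
  have hc : 0 ≤ dist (g z) z := dist_nonneg
  have key : ∀ n : ℕ, ∃ g' h', LocalIsometryPair z x (r - (2 ^ n - 1) * dist (g z) z) g' h' ∧
      dist (g' z) z = 2 ^ n * dist (g z) z ∧ 2 ^ n * dist (g z) z ≤ 2 * dist x z := by
    intro n
    induction n with
    | zero =>
      refine ⟨g, h, by simpa using P, by rw [pow_zero, one_mul], ?_⟩
      simpa using P.dist_apply_self_le (by linarith)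
    | succ n ih =>
      obtain ⟨g', h', P', hd, hb⟩ := ih
      have h2n : (1 : ℝ) ≤ 2 ^ n := one_le_pow₀ (by norm_num)
      have h2n' : (2 : ℝ) ^ (n + 1) = 2 ^ n * 2 := pow_succ 2 n
      have hc' : dist (g' z) z < r - (2 ^ n - 1) * dist (g z) z := by rw [hd]; nlinarith
      have hd' := P'.dist_double_apply_self hc'
      have P'' := P'.double hc' (by nlinarith)
      rw [hd, show r - (2 ^ n - 1) * dist (g z) z - 2 ^ n * dist (g z) z
        = r - (2 ^ (n + 1) - 1) * dist (g z) z by ring] at P''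
      refine ⟨_, _, P'', by rw [hd', hd]; ring, ?_⟩
      have hb' := P''.dist_apply_self_le (by nlinarith)
      rw [hd', hd] at hb'
      rw [h2n']
      linarith
  by_contra hne
  have hcpos : 0 < dist (g z) z := dist_pos.2 hne
  obtain ⟨n, hn⟩ := pow_unbounded_of_one_lt (2 * dist x z / dist (g z) z) one_lt_two
  obtain ⟨_, _, _, _, hb⟩ := key n
  rw [div_lt_iff₀ hcpos] at hn
  linarith

theorem of_conj_reflection {T : E → F} {S : F → E} {R : ℝ} {m : F}
    (hT : ∀ w ∈ ball z R, ∀ w' ∈ ball z R, dist (T w) (T w') = dist w w')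
    (hS : MapsTo S (ball (T z) R) (ball z R)) (hST : InvOn S T (ball z R) (ball (T z) R))
    (hx : dist x z < R) (hm : pointReflection ℝ m (T x) = T (pointReflection ℝ z x)) :
    LocalIsometryPair z x (R - dist (pointReflection ℝ m (T z)) (T z))
      (fun w => pointReflection ℝ z (S (pointReflection ℝ m (T w))))
      (fun w => S (pointReflection ℝ m (T (pointReflection ℝ z w)))) := by
  set σ := pointReflection ℝ z
  set τ := pointReflection ℝ m
  have hσσ : ∀ w, σ (σ w) = w := pointReflection_involutive (𝕜 := ℝ) z
  have hττ : ∀ v, τ (τ v) = v := pointReflection_involutive (𝕜 := ℝ) m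
  have hz : z ∈ ball z R := mem_ball_self (dist_nonneg.trans_lt hx)
  have hsub : ball z (R - dist (τ (T z)) (T z)) ⊆ ball z R := ball_subset_ball (by simp)
  have hσsub : ∀ w ∈ ball z (R - dist (τ (T z)) (T z)), σ w ∈ ball z R := fun w hw =>
    hsub (pointReflection_mem_ball.2 hw)
  have hτT : ∀ w ∈ ball z (R - dist (τ (T z)) (T z)), τ (T w) ∈ ball (T z) R := by
    intro w hw
    rw [mem_ball] at hw ⊢
    calc dist (τ (T w)) (T z) ≤ dist (τ (T w)) (τ (T z)) + dist (τ (T z)) (T z) :=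
          dist_triangle _ _ _
      _ = dist w z + dist (τ (T z)) (T z) := by rw [τ.dist_map, hT w (hsub hw) z hz]
      _ < R := by linarith
  have hS_dist : ∀ v ∈ ball (T z) R, ∀ v' ∈ ball (T z) R, dist (S v) (S v') = dist v v' :=
    fun v hv v' hv' => by rw [← hT _ (hS hv) _ (hS hv'), hST.2 hv, hST.2 hv']
  have hm' : τ (T (σ x)) = T x := by rw [← hm, hττ]
  refine ⟨fun w hw w' hw' => ?_, fun w hw w' hw' => ?_, ⟨fun w hw => ?_, fun w hw => ?_⟩, ?_, ?_⟩
  · rw [σ.dist_map, hS_dist _ (hτT w hw) _ (hτT w' hw'), τ.dist_map,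
      hT _ (hsub hw) _ (hsub hw')]
  · have hσw := pointReflection_mem_ball.2 hw
    have hσw' := pointReflection_mem_ball.2 hw'
    rw [hS_dist _ (hτT _ hσw) _ (hτT _ hσw'), τ.dist_map, hT _ (hσsub w hw) _ (hσsub w' hw'),
      σ.dist_map]
  · dsimp only
    rw [hσσ, hST.2 (hτT w hw), hττ, hST.1 (hsub hw)]
  · dsimp only
    rw [hST.2 (hτT _ (pointReflection_mem_ball.2 hw)), hττ, hST.1 (hσsub w hw), hσσ]
  · rw [hm, hST.1 (pointReflection_mem_ball.2 hx), hσσ]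
  · rw [hm', hST.1 hx]

end LocalIsometryPair

theorem midpoint_eq_of_surjOn_ball {T : E → F} {z x : E} {R : ℝ}
    (hT : ∀ w ∈ ball z R, ∀ w' ∈ ball z R, dist (T w) (T w') = dist w w')
    (hsurj : SurjOn T (ball z R) (ball (T z) R)) (hx : 8 * dist x z < R) :
    midpoint ℝ (T x) (T (pointReflection ℝ z x)) = T z := by
  have hδ : 0 ≤ dist x z := dist_nonneg
  have hz : z ∈ ball z R := mem_ball_self (by linarith)
  have hbij : BijOn T (ball z R) (ball (T z) R) := by
    refine ⟨fun w hw => ?_, fun w hw w' hw' hww' => ?_, hsurj⟩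
    · rwa [mem_ball, hT w hw z hz]
    · rw [← dist_eq_zero, ← hT w hw w' hw', hww', dist_self]
  have : Nonempty E := ⟨z⟩
  have hx' : x ∈ ball z R := by rw [mem_ball]; linarith
  have hy : pointReflection ℝ z x ∈ ball z R := pointReflection_mem_ball.2 hx'
  have P := LocalIsometryPair.of_conj_reflection hT hbij.surjOn.mapsTo_invFunOn
    hbij.invOn_invFunOn hx' (pointReflection_midpoint_left _ _)
  set τ := pointReflection ℝ (midpoint ℝ (T x) (T (pointReflection ℝ z x)))
  have he : dist (τ (T z)) (T z) ≤ 2 * dist x z := by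
    calc dist (τ (T z)) (T z) ≤ dist (τ (T z)) (τ (T x)) + dist (τ (T x)) (T z) :=
          dist_triangle _ _ _
      _ = 2 * dist x z := by
        rw [τ.dist_map, pointReflection_midpoint_left, hT z hz x hx', hT _ hy z hz,
          dist_pointReflection_fixed, dist_comm]
        ring
  have hSτ : Function.invFunOn T (ball z R) (τ (T z)) = z := by
    refine (pointReflection_involutive (𝕜 := ℝ) z).injective ?_
    rw [P.apply_self_eq (by linarith), pointReflection_self]
  have hτ : τ (T z) = T z := by
    conv_rhs => rw [← hSτ]
    exact (hbij.invOn_invFunOn.2 (by rw [mem_ball]; linarith)).symm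
  exact (pointReflection_fixed_iff.1 hτ).symm

theorem exists_ball_map_midpoint [CompleteSpace E] {s : Set E} {T : E → F} (hs : IsOpen s)
    (hT : ∀ x ∈ s, ∀ y ∈ s, dist (T x) (T y) = dist x y)
    (hTs : IsOpen (T '' s)) {a : E} (ha : a ∈ s) :
    ∃ R > 0, ∀ x ∈ ball a R, ∀ y ∈ ball a R, T (midpoint ℝ x y) = midpoint ℝ (T x) (T y) := by
  obtain ⟨R, hR, hRs⟩ := Metric.isOpen_iff.1 hs a ha
  refine ⟨R / 9, by positivity, fun x hx y hy => ?_⟩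
  have hz : dist (midpoint ℝ x y) a < R / 9 := (convex_ball a (R / 9)).midpoint_mem hx hy
  have hxz : dist x (midpoint ℝ x y) = dist x y / 2 := by
    rw [dist_left_midpoint (𝕜 := ℝ), Real.norm_two]; ring
  have hxy : dist x y < 2 * (R / 9) := by
    linarith [dist_triangle_right x y a, mem_ball.1 hx, mem_ball.1 hy]
  have hsub : ball (midpoint ℝ x y) (R - dist (midpoint ℝ x y) a) ⊆ s :=
    (ball_subset_ball' (by simp)).trans hRs
  have := midpoint_eq_of_surjOn_ball (fun w hw w' hw' => hT w (hsub hw) w' (hsub hw'))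
    (surjOn_ball_of_isOpen_image hT hTs hsub) (x := x) (by rw [hxz]; linarith)
  rwa [pointReflection_midpoint_left, eq_comm] at this

end LocalMazurUlam

section RealAffine

variable {E : Type*} [NormedAddCommGroup E] [NormedSpace ℝ E]

theorem eqOn_zero_of_map_midpoint {f : ℝ → E} {α β : ℝ} (hα : f α = 0) (hβ : f β = 0)
    (hf : ContinuousOn f (Icc α β))
    (hmid : ∀ s ∈ Icc α β, ∀ t ∈ Icc α β, f (midpoint ℝ s t) = midpoint ℝ (f s) (f t)) :
    EqOn f 0 (Icc α β) := by
  obtain ⟨C, hC⟩ := isCompact_Icc.exists_bound_of_continuousOn hf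
  have halve : ∀ n : ℕ, ∀ s ∈ Icc α β, ‖f s‖ ≤ C / 2 ^ n := by
    intro n
    induction n with
    | zero => simpa using hC
    | succ n ih =>
      intro s hs
      obtain ⟨e, he, hfe, hs'⟩ : ∃ e ∈ Icc α β, f e = 0 ∧ 2 * s - e ∈ Icc α β := by
        rcases le_total s ((α + β) / 2) with h | h
        · exact ⟨α, left_mem_Icc.2 (hs.1.trans hs.2), hα, by constructor <;> linarith [hs.1]⟩
        · exact ⟨β, right_mem_Icc.2 (hs.1.trans hs.2), hβ, by constructor <;> linarith [hs.2]⟩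
      have hmid_s : midpoint ℝ e (2 * s - e) = s := by
        simp [midpoint_eq_smul_add]
      have := hmid e he _ hs'
      rw [hmid_s, hfe] at this
      rw [this, ← dist_zero_left, dist_left_midpoint (𝕜 := ℝ), dist_zero_left, Real.norm_two,
        pow_succ, ← div_div]
      have := ih _ hs'
      rw [inv_mul_eq_div]
      linarith
  intro s hs
  by_contra hne
  have hpos : 0 < ‖f s‖ := norm_pos_iff.2 hne
  obtain ⟨n, hn⟩ := pow_unbounded_of_one_lt (C / ‖f s‖) one_lt_two
  have := halve n s hs
  rw [div_lt_iff₀ hpos] at hn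
  rw [le_div_iff₀ (by positivity)] at this
  nlinarith

theorem exists_affine_eqOn_Icc_of_map_midpoint {f : ℝ → E} {α β : ℝ} (hαβ : α < β)
    (hf : ContinuousOn f (Icc α β))
    (hmid : ∀ s ∈ Icc α β, ∀ t ∈ Icc α β, f (midpoint ℝ s t) = midpoint ℝ (f s) (f t)) :
    ∃ p q : E, ∀ s ∈ Icc α β, f s = p + s • q := by
  set q := (β - α)⁻¹ • (f β - f α)
  set p := f α - α • q
  have hg := eqOn_zero_of_map_midpoint (f := fun s => f s - (p + s • q)) (by simp [p]) ?_
    (hf.sub (by fun_prop)) ?_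
  · exact ⟨p, q, fun s hs => sub_eq_zero.1 (hg hs)⟩
  · have : (β - α) • q = f β - f α := by
      simp only [q, smul_smul]; rw [mul_inv_cancel₀ (sub_ne_zero.2 hαβ.ne'), one_smul]
    show f β - (p + β • q) = 0
    rw [show f β - (p + β • q) = f β - f α - (β - α) • q by simp only [p, sub_smul]; abel, this,
      sub_self]
  · intro s hs t ht
    rw [hmid s hs t ht]
    simp only [midpoint_eq_smul_add, invOf_eq_inv]
    module

theorem exists_affine_of_locally_affine {f : ℝ → E} {U : Set ℝ} (hU : IsOpen U)
    (hU' : IsPreconnected U) (hf : ∀ t ∈ U, ∃ p q : E, ∀ᶠ s in 𝓝 t, f s = p + s • q) :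
    ∃ p q : E, ∀ s ∈ U, f s = p + s • q := by
  have hderiv : ∀ t ∈ U, ∃ q : E, ∀ᶠ s in 𝓝 t, HasDerivAt f q s := by
    intro t ht
    obtain ⟨p, q, hpq⟩ := hf t ht
    refine ⟨q, hpq.eventually_nhds.mono fun s hs => ?_⟩
    simpa using (((hasDerivAt_id s).smul_const q).const_add p).congr_of_eventuallyEq hs
  have hderiv2 : ∀ t ∈ U, HasDerivAt (deriv f) 0 t := by
    intro t ht
    obtain ⟨q, hq⟩ := hderiv t ht
    exact (hasDerivAt_const t q).congr_of_eventuallyEq (hq.mono fun s hs => hs.deriv)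
  rcases U.eq_empty_or_nonempty with rfl | ⟨t₀, ht₀⟩
  · exact ⟨0, 0, by simp⟩
  have hq : ∀ s ∈ U, deriv f s = deriv f t₀ := fun s hs =>
    hU.is_const_of_deriv_eq_zero hU'
      (fun t ht => (hderiv2 t ht).differentiableAt.differentiableWithinAt)
      (fun t ht => (hderiv2 t ht).deriv) hs ht₀
  have hf' : ∀ s ∈ U, HasDerivAt f (deriv f s) s := fun s hs => by
    obtain ⟨q, hq⟩ := hderiv s hs
    exact hq.self_of_nhds.differentiableAt.hasDerivAt
  have hg : ∀ s ∈ U, HasDerivAt (fun s => f s - s • deriv f t₀) 0 s := fun s hs => by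
    have := (hf' s hs).sub ((hasDerivAt_id' s).smul_const (deriv f t₀))
    rwa [hq s hs, one_smul, sub_self] at this
  obtain ⟨p, hp⟩ := hU.exists_is_const_of_deriv_eq_zero hU'
    (fun s hs => (hg s hs).differentiableAt.differentiableWithinAt) (fun s hs => (hg s hs).deriv)
  exact ⟨p, deriv f t₀, fun s hs => by rw [← hp s hs]; abel⟩

theorem exists_affine_of_locally_map_midpoint {f : ℝ → E} {U : Set ℝ} (hU : IsOpen U)
    (hU' : IsPreconnected U) (hf : ContinuousOn f U)
    (hmid : ∀ t ∈ U, ∃ ε > 0, ∀ s ∈ ball t ε, ∀ s' ∈ ball t ε,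
      f (midpoint ℝ s s') = midpoint ℝ (f s) (f s')) :
    ∃ p q : E, ∀ s ∈ U, f s = p + s • q := by
  refine exists_affine_of_locally_affine hU hU' fun t ht => ?_
  obtain ⟨ε, hε, hεmid⟩ := hmid t ht
  obtain ⟨δ, hδ, hδU⟩ := Metric.isOpen_iff.1 hU t ht
  have hsub : Icc (t - min ε δ / 2) (t + min ε δ / 2) ⊆ ball t ε ∩ ball t δ := by
    rw [← Real.closedBall_eq_Icc]
    exact (closedBall_subset_ball (by linarith [lt_min hε hδ])).trans
      (subset_inter (ball_subset_ball (min_le_left _ _)) (ball_subset_ball (min_le_right _ _)))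
  obtain ⟨p, q, hpq⟩ := exists_affine_eqOn_Icc_of_map_midpoint
    (by linarith [lt_min hε hδ] : t - min ε δ / 2 < t + min ε δ / 2)
    (hf.mono fun s hs => hδU (hsub hs).2) fun s hs s' hs' => hεmid s (hsub hs).1 s' (hsub hs').1
  exact ⟨p, q, mem_of_superset (Icc_mem_nhds (by linarith [lt_min hε hδ])
    (by linarith [lt_min hε hδ])) hpq⟩

end RealAffine

theorem UniformContinuousOn.exists_tendsto_nhdsWithin {X Y : Type*} [UniformSpace X]
    [UniformSpace Y] [CompleteSpace Y] {s : Set X} {f : X → Y} (hf : UniformContinuousOn f s)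
    {a : X} (ha : a ∈ closure s) : ∃ b, Tendsto f (𝓝[s] a) (𝓝 b) :=
  have := mem_closure_iff_nhdsWithin_neBot.1 ha
  CompleteSpace.complete ((cauchy_nhds.mono nhdsWithin_le_nhds).map_of_le hf inf_le_right)

theorem lipschitzOnWith_one_of_dist_eq {X Y : Type*} [PseudoMetricSpace X] [PseudoMetricSpace Y]
    {s : Set X} {f : X → Y} (hf : ∀ x ∈ s, ∀ y ∈ s, dist (f x) (f y) = dist x y) :
    LipschitzOnWith 1 f s :=
  LipschitzOnWith.of_dist_le_mul fun x hx y hy => by rw [hf x hx y hy, NNReal.coe_one, one_mul]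

section BanachAlgebra

variable {A B : Type*} [NormedRing A] [NormedAlgebra ℂ A] [CompleteSpace A]
  [NormedRing B] [NormedAlgebra ℂ B] {𝔄 : Set A} {𝔅 : Set B} {T : A → B}

theorem exists_affine_along_ray (h𝔄 : IsOpenUnitSubgroup 𝔄) (hT𝔄 : IsOpen (T '' 𝔄))
    (hiso : ∀ a ∈ 𝔄, ∀ b ∈ 𝔄, dist (T a) (T b) = dist a b) {x₀ : A} (hx₀ : x₀ ∈ 𝔄) :
    ∃ p q : B, ∀ t ∈ Ioi (0 : ℝ), T (t • x₀) = p + t • q := by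
  have hray : ∀ t ∈ Ioi (0 : ℝ), t • x₀ ∈ 𝔄 := fun t ht => h𝔄.real_smul_mem (ne_of_gt ht) hx₀
  refine exists_affine_of_locally_map_midpoint isOpen_Ioi isPreconnected_Ioi
    ((lipschitzOnWith_one_of_dist_eq hiso).continuousOn.comp (by fun_prop) hray) fun t ht => ?_
  obtain ⟨R, hR, hRmid⟩ := exists_ball_map_midpoint h𝔄.isOpen hiso hT𝔄 (hray t ht)
  have hball : ∀ s ∈ ball t (R / (‖x₀‖ + 1)), s • x₀ ∈ ball (t • x₀) R := fun s hs => by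
    rw [mem_ball, dist_eq_norm, ← sub_smul, norm_smul, ← dist_eq_norm', dist_comm]
    rw [mem_ball, lt_div_iff₀ (by positivity)] at hs
    nlinarith [norm_nonneg x₀, dist_nonneg (x := s) (y := t)]
  refine ⟨R / (‖x₀‖ + 1), by positivity, fun s hs s' hs' => ?_⟩
  rw [← hRmid _ (hball s hs) _ (hball s' hs')]
  congr 1
  simp only [midpoint_eq_smul_add, invOf_eq_inv]
  module

theorem add_mem_of_tendsto (h𝔄 : IsOpenUnitSubgroup 𝔄) (h𝔅 : IsOpenUnitSubgroup 𝔅)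
    (hT : T '' 𝔄 = 𝔅) (hiso : ∀ a ∈ 𝔄, ∀ b ∈ 𝔄, dist (T a) (T b) = dist a b) {u : B}
    (hu : Tendsto T (𝓝[𝔄] 0) (𝓝 u)) {c : B} (hc : c ∈ 𝔅) : u + c ∈ 𝔅 := by
  rw [← hT] at hc
  obtain ⟨x₀, hx₀, rfl⟩ := hc
  have hray : ∀ t ∈ Ioi (0 : ℝ), t • x₀ ∈ 𝔄 := fun t ht => h𝔄.real_smul_mem (ne_of_gt ht) hx₀
  obtain ⟨p, q, hpq⟩ := exists_affine_along_ray h𝔄 (hT ▸ h𝔅.isOpen) hiso hx₀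
  have hp : p = u := by
    refine tendsto_nhds_unique (f := fun t : ℝ => T (t • x₀)) (l := 𝓝[>] 0) ?_
      (hu.comp (tendsto_nhdsWithin_iff.2 ⟨?_, eventually_nhdsWithin_of_forall hray⟩))
    · refine Tendsto.congr' (eventually_nhdsWithin_of_forall fun t ht => (hpq t ht).symm) ?_
      exact ((by fun_prop : Continuous fun t : ℝ => p + t • q).tendsto' 0 p (by simp)).mono_left
        nhdsWithin_le_nhds
    · exact ((by fun_prop : Continuous fun t : ℝ => t • x₀).tendsto' 0 0
        (zero_smul ℝ x₀)).mono_left nhdsWithin_le_nhds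
  have h1 : T x₀ = p + q := by simpa using hpq 1 (mem_Ioi.2 one_pos)
  have hhalf := h𝔅.real_smul_mem two_ne_zero
    (hT ▸ mem_image_of_mem T (hray (1 / 2) (by norm_num)))
  rw [hpq _ (by norm_num)] at hhalf
  convert hhalf using 1
  rw [h1, ← hp]
  module

end BanachAlgebra

/-- For a surjective isometry `T` between open subgroups of the invertible
groups of unital complex Banach algebras, the limit `lim_{𝔄 ∋ a → 0} T(a)`
exists and lies in the Jacobson radical of `B`. -/
theorem isometry_of_open_subgroups_tendsto_radical
    {A B : Type*} [NormedRing A] [NormedAlgebra ℂ A] [CompleteSpace A]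
    [NormedRing B] [NormedAlgebra ℂ B] [CompleteSpace B]
    (𝔄 : Set A) (𝔅 : Set B)
    (h𝔄unit : ∀ a ∈ 𝔄, IsUnit a) (h𝔄one : (1 : A) ∈ 𝔄)
    (h𝔄mul : ∀ a ∈ 𝔄, ∀ b ∈ 𝔄, a * b ∈ 𝔄)
    (h𝔄inv : ∀ a ∈ 𝔄, Ring.inverse a ∈ 𝔄) (h𝔄open : IsOpen 𝔄)
    (h𝔅unit : ∀ b ∈ 𝔅, IsUnit b) (h𝔅one : (1 : B) ∈ 𝔅)
    (h𝔅mul : ∀ a ∈ 𝔅, ∀ b ∈ 𝔅, a * b ∈ 𝔅)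
    (h𝔅inv : ∀ b ∈ 𝔅, Ring.inverse b ∈ 𝔅) (h𝔅open : IsOpen 𝔅)
    (T : A → B) (hmaps : Set.MapsTo T 𝔄 𝔅) (hsurj : Set.SurjOn T 𝔄 𝔅)
    (hiso : ∀ a ∈ 𝔄, ∀ b ∈ 𝔄, ‖T a - T b‖ = ‖a - b‖) :
    ∃ u₀ ∈ Ideal.jacobson (⊥ : Ideal B),
      Filter.Tendsto T (nhdsWithin 0 𝔄) (nhds u₀) := by
  have h𝔄 : IsOpenUnitSubgroup 𝔄 := ⟨h𝔄unit, h𝔄one, h𝔄mul, h𝔄inv, h𝔄open⟩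
  have h𝔅 : IsOpenUnitSubgroup 𝔅 := ⟨h𝔅unit, h𝔅one, h𝔅mul, h𝔅inv, h𝔅open⟩
  have hdist : ∀ a ∈ 𝔄, ∀ b ∈ 𝔄, dist (T a) (T b) = dist a b := by
    simpa only [dist_eq_norm] using hiso
  obtain ⟨u₀, hu₀⟩ := (lipschitzOnWith_one_of_dist_eq hdist).uniformContinuousOn
    |>.exists_tendsto_nhdsWithin h𝔄.zero_mem_closure
  exact ⟨u₀, h𝔅.mem_jacobson_bot_of_add_mem fun c hc =>
    add_mem_of_tendsto h𝔄 h𝔅 (hsurj.image_eq_of_mapsTo hmaps) hdist hu₀ hc, hu₀⟩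
end

section
/- Let B be a unital complex Banach algebra and let 𝔅 be an open subgroup of the invertible group B⁻¹. Then for every b ∈ 𝔅 and every u ∈ rad(B), the element u + b belongs to 𝔅. In particular, u + 𝔅 = 𝔅 for every u ∈ rad(B). -/
/-!
If `b ∈ 𝔅` and `u` lies in the radical, then `v = u b⁻¹` does too, so the whole complex line
`z ↦ 1 + z v` consists of invertible elements. An open submonoid of the units is also relatively
closed in them (a unit `x ∉ 𝔅` has the neighbourhood `{y | x y⁻¹ ∈ 𝔅}` avoiding `𝔅`), so this
connected line through `1` lies in `𝔅`, and then `u + b = (1 + v) b ∈ 𝔅`.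
-/

open NormedRing

lemma Ideal.exists_mul_add_one_eq_one_of_mem_jacobson_bot {R : Type*} [Ring R] {u : R}
    (hu : u ∈ Ideal.jacobson (⊥ : Ideal R)) : ∃ s, s * (u + 1) = 1 := by
  obtain ⟨s, hs⟩ := Ideal.exists_mul_add_sub_mem_of_mem_jacobson u hu
  exact ⟨s, sub_eq_zero.mp ((Submodule.mem_bot R).mp hs)⟩

lemma Ideal.isUnit_add_one_of_mem_jacobson_bot {R : Type*} [Ring R] {u : R}
    (hu : u ∈ Ideal.jacobson (⊥ : Ideal R)) : IsUnit (u + 1) := by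
  obtain ⟨s, hs⟩ := exists_mul_add_one_eq_one_of_mem_jacobson_bot hu
  -- `s = -(s u) + 1` with `-(s u)` again in the radical, so `s` has a left inverse `t`,
  -- and `t = t s (u + 1) = u + 1`.
  have hs_eq : -(s * u) + 1 = s := by rw [← hs, mul_add, mul_one]; abel
  obtain ⟨t, ht⟩ := exists_mul_add_one_eq_one_of_mem_jacobson_bot
    (neg_mem (Ideal.mul_mem_left _ s hu))
  rw [hs_eq] at ht
  have ht_eq : t = u + 1 :=
    calc t = t * (s * (u + 1)) := by rw [hs, mul_one]
      _ = u + 1 := by rw [← mul_assoc, ht, one_mul]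
  exact ⟨⟨u + 1, s, ht_eq ▸ ht, hs⟩, rfl⟩

section OpenSubmonoid

variable {R : Type*} [NormedRing R] [HasSummableGeomSeries R]

lemma Submonoid.isOpen_setOf_isUnit_diff_of_isOpen {S : Submonoid R} (hS : IsOpen (S : Set R)) :
    IsOpen ({x : R | IsUnit x} \ S) := by
  refine isOpen_iff_mem_nhds.mpr fun x ⟨hx, hxS⟩ => ?_
  have hcont : ContinuousAt (fun y => x * Ring.inverse y) x :=
    continuousAt_const.mul (hx.unit_spec ▸ inverse_continuousAt hx.unit)
  have hnear : {y | x * Ring.inverse y ∈ S} ∈ nhds x :=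
    hcont.preimage_mem_nhds (hS.mem_nhds (by simp [Ring.mul_inverse_cancel x hx]))
  filter_upwards [hnear, Units.isOpen.mem_nhds hx] with y hyS hy
  refine ⟨hy, fun hy' => hxS ?_⟩
  simpa [mul_assoc, Ring.inverse_mul_cancel y hy] using S.mul_mem hyS hy'

lemma Submonoid.subset_of_isPreconnected_of_isOpen {S : Submonoid R} (hS : IsOpen (S : Set R))
    {s : Set R} (hs : IsPreconnected s) (hs_unit : ∀ x ∈ s, IsUnit x) (hsS : (s ∩ S).Nonempty) :
    s ⊆ S :=
  hs.subset_left_of_subset_union hS (isOpen_setOf_isUnit_diff_of_isOpen hS)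
    Set.disjoint_sdiff_right (fun x hx => by by_cases h : x ∈ S <;> simp [h, hs_unit x hx]) hsS

end OpenSubmonoid

lemma Submonoid.add_mem_of_mem_jacobson_bot {𝕜 B : Type*} [NormedField 𝕜] [PreconnectedSpace 𝕜]
    [NormedRing B] [NormedAlgebra 𝕜 B] [HasSummableGeomSeries B]
    {S : Submonoid B} (hS : IsOpen (S : Set B)) (hS_unit : ∀ b ∈ S, IsUnit b)
    {b u : B} (hb : b ∈ S) (hu : u ∈ Ideal.jacobson (⊥ : Ideal B)) : u + b ∈ S := by
  set v := u * Ring.inverse b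
  have hv : v ∈ Ideal.jacobson (⊥ : Ideal B) := Ideal.mul_mem_right _ _ hu
  have hline : Set.range (fun z : 𝕜 => z • v + 1) ⊆ S := by
    refine subset_of_isPreconnected_of_isOpen hS (isPreconnected_range (by fun_prop)) ?_
      ⟨1, ⟨0, by simp⟩, S.one_mem⟩
    rintro _ ⟨z, rfl⟩
    refine Ideal.isUnit_add_one_of_mem_jacobson_bot ?_
    rw [Algebra.smul_def]
    exact Ideal.mul_mem_left _ _ hv
  have hvb : (v + 1) * b = u + b := by
    rw [add_mul, one_mul, mul_assoc, Ring.inverse_mul_cancel b (hS_unit b hb), mul_one]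
  exact hvb ▸ S.mul_mem (hline ⟨1, by simp⟩) hb

theorem radical_translation_invariant_of_open_subgroup_general
    {B : Type*} [NormedRing B] [NormedAlgebra ℂ B] [CompleteSpace B]
    (𝔅 : Set B)
    (h𝔅unit : ∀ b ∈ 𝔅, IsUnit b) (h𝔅one : (1 : B) ∈ 𝔅)
    (h𝔅mul : ∀ a ∈ 𝔅, ∀ b ∈ 𝔅, a * b ∈ 𝔅)
    (h𝔅open : IsOpen 𝔅) :
    (∀ b ∈ 𝔅, ∀ u ∈ Ideal.jacobson (⊥ : Ideal B), u + b ∈ 𝔅) ∧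
    (∀ u ∈ Ideal.jacobson (⊥ : Ideal B), (fun b => u + b) '' 𝔅 = 𝔅) := by
  let S : Submonoid B := ⟨⟨𝔅, fun ha hb => h𝔅mul _ ha _ hb⟩, h𝔅one⟩
  have htranslate : ∀ b ∈ 𝔅, ∀ u ∈ Ideal.jacobson (⊥ : Ideal B), u + b ∈ 𝔅 :=
    fun b hb u hu => S.add_mem_of_mem_jacobson_bot (𝕜 := ℂ) h𝔅open h𝔅unit hb hu
  refine ⟨htranslate, fun u hu => Set.Subset.antisymm ?_ fun x hx => ?_⟩
  · rintro _ ⟨b, hb, rfl⟩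
    exact htranslate b hb u hu
  · exact ⟨-u + x, htranslate x hx (-u) (neg_mem hu), add_neg_cancel_left u x⟩

/-- An open subgroup `𝔅` of the invertible group of a unital complex Banach
algebra `B` is invariant under translation by elements of the Jacobson
radical: `u + b ∈ 𝔅` for every `b ∈ 𝔅` and `u ∈ rad B`; in particular
`u + 𝔅 = 𝔅`. -/
theorem radical_translation_invariant_of_open_subgroup
    {B : Type*} [NormedRing B] [NormedAlgebra ℂ B] [CompleteSpace B]
    (𝔅 : Set B)
    (h𝔅unit : ∀ b ∈ 𝔅, IsUnit b) (h𝔅one : (1 : B) ∈ 𝔅)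
    (h𝔅mul : ∀ a ∈ 𝔅, ∀ b ∈ 𝔅, a * b ∈ 𝔅)
    (h𝔅inv : ∀ b ∈ 𝔅, Ring.inverse b ∈ 𝔅) (h𝔅open : IsOpen 𝔅) :
    (∀ b ∈ 𝔅, ∀ u ∈ Ideal.jacobson (⊥ : Ideal B), u + b ∈ 𝔅) ∧
    (∀ u ∈ Ideal.jacobson (⊥ : Ideal B), (fun b => u + b) '' 𝔅 = 𝔅) :=
  radical_translation_invariant_of_open_subgroup_general 𝔅 h𝔅unit h𝔅one h𝔅mul h𝔅open
end

section
/- Let A and B be unital complex Banach algebras. Then the principal component A⁻¹ₑ is isometrically isomorphic to B⁻¹ₑ as a metrizable group if and only if A⁻¹ is isometrically isomorphic to B⁻¹ as a metrizable group. Moreover, in this case A is isometrically isomorphic to B as a real Banach algebra (there exists a bijective real-linear multiplicative isometry from A onto B). -/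
/-!
Both groups contain the ball of radius `1` about the identity (Neumann series), and an isometric
group isomorphism `T` fixes `1`, so in the chart `w ↦ 1 + w` it becomes a surjective isometry `f`
between the open unit balls of `A` and `B` with `f 0 = 0`. A local form of the Mazur–Ulam theorem
shows that `f` preserves midpoints near `0`, hence `a ↦ 2ⁿ f (2⁻ⁿ a)` is a surjective real-linear
isometry `S : A → B` agreeing with `f` near `0`. Multiplicativity of `T` becomes
`f (u + v + u v) = f u + f v + f u f v`; applied to `t a` and `t b` for small `t`, its `t²` terms
force `S (a b) = S a S b`. Conversely, a multiplicative isometric bijection maps the invertible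
group, and, being a homeomorphism, its principal component, onto those of `B`.
-/

/-- Two subsets (typically subgroups of the invertible groups) of normed rings
are isometrically isomorphic as metrizable groups if there is a bijection
between them that is multiplicative and preserves the norm distance. -/
def IsIsometricallyIsomorphicGroup {A B : Type*} [NormedRing A] [NormedRing B]
    (GA : Set A) (GB : Set B) : Prop :=
  ∃ T : A → B, Set.BijOn T GA GB ∧
    (∀ x ∈ GA, ∀ y ∈ GA, T (x * y) = T x * T y) ∧
    (∀ x ∈ GA, ∀ y ∈ GA, dist (T x) (T y) = dist x y)

open Metric Set Filter Topology

section MidpointSets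

variable {X Y : Type*} [PseudoMetricSpace X] [PseudoMetricSpace Y]

/-- The sets `H_n` of Väisälä's proof of the Mazur–Ulam theorem: defined by the metric alone, so
isometries carry them onto each other, while in a normed space they shrink to the midpoint of `x`
and `y`. -/
def midpointSets (x y : X) : ℕ → Set X
  | 0 => {z | dist z x ≤ dist x y / 2 ∧ dist z y ≤ dist x y / 2}
  | n + 1 => {z | z ∈ midpointSets x y n ∧
      ∀ w ∈ midpointSets x y n, dist z w ≤ dist x y / 2 ^ (n + 1)}

lemma midpointSets_antitone (x y : X) : Antitone (midpointSets x y) :=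
  antitone_nat_of_succ_le fun _ _ hz => hz.1

lemma dist_le_of_mem_midpointSets {x y z w : X} {n : ℕ} (hz : z ∈ midpointSets x y n)
    (hw : w ∈ midpointSets x y n) : dist z w ≤ dist x y / 2 ^ n := by
  cases n with
  | zero =>
    calc dist z w ≤ dist z x + dist w x := dist_triangle_right z w x
      _ ≤ dist x y / 2 + dist x y / 2 := add_le_add hz.1 hw.1
      _ = dist x y / 2 ^ 0 := by ring
  | succ n => exact hz.2 w hw.1

lemma image_midpointSets {f : X → Y} {U : Set X} {V : Set Y} (hf : BijOn f U V)
    (hiso : ∀ u ∈ U, ∀ v ∈ U, dist (f u) (f v) = dist u v) {x y : X} (hx : x ∈ U) (hy : y ∈ U)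
    (hU : midpointSets x y 0 ⊆ U) (hV : midpointSets (f x) (f y) 0 ⊆ V) :
    ∀ n, f '' midpointSets x y n = midpointSets (f x) (f y) n
  | 0 => by
    have hmem : ∀ z ∈ U, f z ∈ midpointSets (f x) (f y) 0 ↔ z ∈ midpointSets x y 0 := by
      intro z hz
      simp only [midpointSets, mem_ofPred_eq, hiso z hz x hx, hiso z hz y hy, hiso x hx y hy]
    ext w
    constructor
    · rintro ⟨z, hz, rfl⟩
      exact (hmem z (hU hz)).2 hz
    · intro hw
      obtain ⟨z, hzU, rfl⟩ := hf.surjOn (hV hw)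
      exact ⟨z, (hmem z hzU).1 hw, rfl⟩
  | n + 1 => by
    have ih := image_midpointSets hf hiso hx hy hU hV n
    have hU' : ∀ z ∈ midpointSets x y n, z ∈ U := fun z hz =>
      hU (midpointSets_antitone x y (Nat.zero_le n) hz)
    ext w
    simp only [midpointSets, mem_ofPred_eq, ← ih, mem_image, forall_exists_index, and_imp,
      forall_apply_eq_imp_iff₂, hiso x hx y hy]
    constructor
    · rintro ⟨z, ⟨hz, hzw⟩, rfl⟩
      exact ⟨⟨z, hz, rfl⟩, fun v hv => by rw [hiso z (hU' z hz) v (hU' v hv)]; exact hzw v hv⟩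
    · rintro ⟨⟨z, hz, rfl⟩, hzw⟩
      exact ⟨z, ⟨hz, fun v hv => by rw [← hiso z (hU' z hz) v (hU' v hv)]; exact hzw v hv⟩, rfl⟩

lemma midpointSets_zero_subset_ball {x y p : X} {r : ℝ} (hx : dist x p < r / 2)
    (hy : dist y p < r / 2) : midpointSets x y 0 ⊆ ball p r := fun z hz => by
  rw [mem_ball]
  calc dist z p ≤ dist z x + dist x p := dist_triangle z x p
    _ ≤ (dist x p + dist y p) / 2 + dist x p := by
        gcongr
        exact hz.1.trans (by gcongr; exact dist_triangle_right x y p)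
    _ < r := by linarith

end MidpointSets

section MazurUlam

variable {E F : Type*} [NormedAddCommGroup E] [NormedAddCommGroup F]

lemma add_sub_mem_midpointSets {x y : E} :
    ∀ {n : ℕ} {z : E}, z ∈ midpointSets x y n → x + y - z ∈ midpointSets x y n
  | 0, z, hz => by
    refine ⟨?_, ?_⟩
    · rw [dist_eq_norm, show x + y - z - x = -(z - y) by abel, norm_neg, ← dist_eq_norm]
      exact hz.2
    · rw [dist_eq_norm, show x + y - z - y = -(z - x) by abel, norm_neg, ← dist_eq_norm]
      exact hz.1
  | n + 1, z, hz => by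
    refine ⟨add_sub_mem_midpointSets hz.1, fun w hw => ?_⟩
    rw [dist_eq_norm, show x + y - z - w = -(z - (x + y - w)) by abel, norm_neg, ← dist_eq_norm]
    exact hz.2 (x + y - w) (add_sub_mem_midpointSets hw)

variable [NormedSpace ℝ E] [NormedSpace ℝ F]

lemma midpoint_mem_midpointSets (x y : E) : ∀ n, midpoint ℝ x y ∈ midpointSets x y n
  | 0 => by
    refine ⟨?_, ?_⟩ <;> simp [div_eq_inv_mul, dist_comm]
  | n + 1 => by
    refine ⟨midpoint_mem_midpointSets x y n, fun w hw => ?_⟩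
    have hm : midpoint ℝ (x + y - w) w = midpoint ℝ x y := by
      rw [midpoint_eq_smul_add, midpoint_eq_smul_add, sub_add_cancel]
    calc dist (midpoint ℝ x y) w = 2⁻¹ * dist (x + y - w) w := by
          rw [← hm, dist_midpoint_right, Real.norm_ofNat]
      _ ≤ 2⁻¹ * (dist x y / 2 ^ n) := by
          gcongr
          exact dist_le_of_mem_midpointSets (add_sub_mem_midpointSets hw) hw
      _ = dist x y / 2 ^ (n + 1) := by ring

lemma eq_midpoint_of_forall_mem_midpointSets {x y z : E} (hz : ∀ n, z ∈ midpointSets x y n) :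
    z = midpoint ℝ x y := by
  have hlim : Tendsto (fun n : ℕ => dist x y / 2 ^ n) atTop (𝓝 0) :=
    tendsto_const_nhds.div_atTop (tendsto_pow_atTop_atTop_of_one_lt one_lt_two)
  exact dist_le_zero.1 <| ge_of_tendsto' hlim fun n =>
    dist_le_of_mem_midpointSets (hz n) (midpoint_mem_midpointSets x y n)

lemma map_midpoint_of_bijOn {f : E → F} {U : Set E} {V : Set F} (hf : BijOn f U V)
    (hiso : ∀ u ∈ U, ∀ v ∈ U, dist (f u) (f v) = dist u v) {x y : E} (hx : x ∈ U) (hy : y ∈ U)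
    (hU : midpointSets x y 0 ⊆ U) (hV : midpointSets (f x) (f y) 0 ⊆ V) :
    f (midpoint ℝ x y) = midpoint ℝ (f x) (f y) :=
  eq_midpoint_of_forall_mem_midpointSets fun n =>
    image_midpointSets hf hiso hx hy hU hV n ▸ mem_image_of_mem f (midpoint_mem_midpointSets x y n)

lemma map_midpoint_of_bijOn_ball {f : E → F} (hf : BijOn f (ball 0 1) (ball 0 1))
    (hiso : ∀ u ∈ ball (0 : E) 1, ∀ v ∈ ball (0 : E) 1, dist (f u) (f v) = dist u v)
    (hf0 : f 0 = 0) {x y : E} (hx : ‖x‖ < 2⁻¹) (hy : ‖y‖ < 2⁻¹) :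
    f (midpoint ℝ x y) = midpoint ℝ (f x) (f y) := by
  have hball : ∀ {u : E}, ‖u‖ < 2⁻¹ → u ∈ ball (0 : E) 1 := fun hu => by
    rw [mem_ball_zero_iff]; linarith
  have hnorm : ∀ {u : E}, ‖u‖ < 2⁻¹ → ‖f u‖ < 2⁻¹ := fun hu => by
    simpa [hf0] using (hiso _ (hball hu) 0 (mem_ball_self one_pos)).trans_lt (by simpa using hu)
  refine map_midpoint_of_bijOn hf hiso (hball hx) (hball hy)
    (midpointSets_zero_subset_ball ?_ ?_) (midpointSets_zero_subset_ball ?_ ?_) <;>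
  · rw [dist_zero_right]; linarith [hnorm hx, hnorm hy]

end MazurUlam

section DyadicExtension

lemma smul_midpoint {V : Type*} [AddCommGroup V] [Module ℝ V] (c : ℝ) (x y : V) :
    c • midpoint ℝ x y = midpoint ℝ (c • x) (c • y) := by
  simp only [midpoint_eq_smul_add, smul_add, smul_comm c]

variable {E F : Type*} [NormedAddCommGroup E] [NormedSpace ℝ E]
  [NormedAddCommGroup F] [NormedSpace ℝ F]

lemma eventually_norm_inv_two_pow_smul_lt (a : E) :
    ∀ᶠ n : ℕ in atTop, ‖((2 : ℝ) ^ n)⁻¹ • a‖ < 2⁻¹ := by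
  have hlim : Tendsto (fun n : ℕ => ((2 : ℝ) ^ n)⁻¹ * ‖a‖) atTop (𝓝 0) := by
    simpa using (tendsto_inv_atTop_zero.comp
      (tendsto_pow_atTop_atTop_of_one_lt one_lt_two)).mul_const ‖a‖
  filter_upwards [hlim.eventually_lt_const (by norm_num : (0 : ℝ) < 2⁻¹)] with n hn
  rwa [norm_smul, norm_inv, norm_pow, Real.norm_ofNat]

/-- `a ↦ 2ⁿ f (2⁻ⁿ a)` for some `n` with `‖2⁻ⁿ a‖ < 1/2`; the choice of `n` is irrelevant once `f`
commutes with halving. -/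
noncomputable def dyadicExtension (f : E → F) (a : E) : F :=
  (2 : ℝ) ^ (eventually_norm_inv_two_pow_smul_lt a).exists.choose •
    f (((2 : ℝ) ^ (eventually_norm_inv_two_pow_smul_lt a).exists.choose)⁻¹ • a)

variable {f : E → F}

lemma map_inv_two_smul (hf0 : f 0 = 0)
    (hmid : ∀ x y : E, ‖x‖ < 2⁻¹ → ‖y‖ < 2⁻¹ → f (midpoint ℝ x y) = midpoint ℝ (f x) (f y))
    {u : E} (hu : ‖u‖ < 2⁻¹) : f ((2 : ℝ)⁻¹ • u) = (2 : ℝ)⁻¹ • f u := by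
  simpa [hf0, midpoint_eq_smul_add] using hmid 0 u (by simp) hu

lemma map_inv_two_pow_smul (hf0 : f 0 = 0)
    (hmid : ∀ x y : E, ‖x‖ < 2⁻¹ → ‖y‖ < 2⁻¹ → f (midpoint ℝ x y) = midpoint ℝ (f x) (f y)) :
    ∀ (n : ℕ) {u : E}, ‖u‖ < 2⁻¹ → f (((2 : ℝ) ^ n)⁻¹ • u) = ((2 : ℝ) ^ n)⁻¹ • f u
  | 0, u, _ => by simp
  | n + 1, u, hu => by
    have hu' : ‖(2 : ℝ)⁻¹ • u‖ < 2⁻¹ := by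
      rw [norm_smul, norm_inv, Real.norm_ofNat]; linarith [norm_nonneg u]
    rw [pow_succ, mul_inv, mul_smul, mul_smul, map_inv_two_pow_smul hf0 hmid n hu',
      map_inv_two_smul hf0 hmid hu]

lemma two_pow_smul_map_inv_two_pow_smul_of_le (hf0 : f 0 = 0)
    (hmid : ∀ x y : E, ‖x‖ < 2⁻¹ → ‖y‖ < 2⁻¹ → f (midpoint ℝ x y) = midpoint ℝ (f x) (f y))
    {a : E} {m n : ℕ} (hm : ‖((2 : ℝ) ^ m)⁻¹ • a‖ < 2⁻¹) (hmn : m ≤ n) :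
    (2 : ℝ) ^ n • f (((2 : ℝ) ^ n)⁻¹ • a) = (2 : ℝ) ^ m • f (((2 : ℝ) ^ m)⁻¹ • a) := by
  obtain ⟨k, rfl⟩ := Nat.exists_eq_add_of_le hmn
  have hsplit : ((2 : ℝ) ^ (m + k))⁻¹ • a = ((2 : ℝ) ^ k)⁻¹ • ((2 : ℝ) ^ m)⁻¹ • a := by
    rw [smul_smul, ← mul_inv, ← pow_add, add_comm]
  rw [hsplit, map_inv_two_pow_smul hf0 hmid k hm, smul_smul, pow_add, mul_assoc,
    mul_inv_cancel₀ (by positivity), mul_one]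

lemma dyadicExtension_eq (hf0 : f 0 = 0)
    (hmid : ∀ x y : E, ‖x‖ < 2⁻¹ → ‖y‖ < 2⁻¹ → f (midpoint ℝ x y) = midpoint ℝ (f x) (f y))
    {a : E} {n : ℕ} (hn : ‖((2 : ℝ) ^ n)⁻¹ • a‖ < 2⁻¹) :
    dyadicExtension f a = (2 : ℝ) ^ n • f (((2 : ℝ) ^ n)⁻¹ • a) := by
  have hm := (eventually_norm_inv_two_pow_smul_lt a).exists.choose_spec
  rcases le_total (eventually_norm_inv_two_pow_smul_lt a).exists.choose n with h | h
  · exact (two_pow_smul_map_inv_two_pow_smul_of_le hf0 hmid hm h).symm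
  · exact two_pow_smul_map_inv_two_pow_smul_of_le hf0 hmid hn h

lemma dyadicExtension_eq_self (hf0 : f 0 = 0)
    (hmid : ∀ x y : E, ‖x‖ < 2⁻¹ → ‖y‖ < 2⁻¹ → f (midpoint ℝ x y) = midpoint ℝ (f x) (f y))
    {a : E} (ha : ‖a‖ < 2⁻¹) : dyadicExtension f a = f a := by
  simpa using dyadicExtension_eq hf0 hmid (n := 0) (by simpa using ha)

lemma dyadicExtension_midpoint (hf0 : f 0 = 0)
    (hmid : ∀ x y : E, ‖x‖ < 2⁻¹ → ‖y‖ < 2⁻¹ → f (midpoint ℝ x y) = midpoint ℝ (f x) (f y))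
    (a b : E) :
    dyadicExtension f (midpoint ℝ a b) =
      midpoint ℝ (dyadicExtension f a) (dyadicExtension f b) := by
  obtain ⟨n, ha, hb, hab⟩ := ((eventually_norm_inv_two_pow_smul_lt a).and
    ((eventually_norm_inv_two_pow_smul_lt b).and
      (eventually_norm_inv_two_pow_smul_lt (midpoint ℝ a b)))).exists
  rw [dyadicExtension_eq hf0 hmid ha, dyadicExtension_eq hf0 hmid hb,
    dyadicExtension_eq hf0 hmid hab, smul_midpoint, hmid _ _ ha hb, smul_midpoint]

lemma dist_dyadicExtension (hf0 : f 0 = 0)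
    (hmid : ∀ x y : E, ‖x‖ < 2⁻¹ → ‖y‖ < 2⁻¹ → f (midpoint ℝ x y) = midpoint ℝ (f x) (f y))
    (hiso : ∀ x y : E, ‖x‖ < 2⁻¹ → ‖y‖ < 2⁻¹ → dist (f x) (f y) = dist x y) (a b : E) :
    dist (dyadicExtension f a) (dyadicExtension f b) = dist a b := by
  obtain ⟨n, ha, hb⟩ := ((eventually_norm_inv_two_pow_smul_lt a).and
    (eventually_norm_inv_two_pow_smul_lt b)).exists
  rw [dyadicExtension_eq hf0 hmid ha, dyadicExtension_eq hf0 hmid hb, dist_smul₀, hiso _ _ ha hb,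
    dist_smul₀, ← mul_assoc, ← norm_mul, mul_inv_cancel₀ (by positivity), norm_one, one_mul]

theorem exists_linearIsometryEquiv_eqOn_ball {f : E → F} (hf : BijOn f (ball 0 1) (ball 0 1))
    (hiso : ∀ u ∈ ball (0 : E) 1, ∀ v ∈ ball (0 : E) 1, dist (f u) (f v) = dist u v)
    (hf0 : f 0 = 0) : ∃ S : E ≃ₗᵢ[ℝ] F, EqOn S f (ball 0 2⁻¹) := by
  have hball : ∀ {u : E}, ‖u‖ < 2⁻¹ → u ∈ ball (0 : E) 1 := fun hu => by
    rw [mem_ball_zero_iff]; linarith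
  have hmid := fun (x y : E) (hx : ‖x‖ < 2⁻¹) (hy : ‖y‖ < 2⁻¹) =>
    map_midpoint_of_bijOn_ball hf hiso hf0 hx hy
  have hdist := dist_dyadicExtension hf0 hmid fun x y hx hy => hiso x (hball hx) y (hball hy)
  have hS0 : dyadicExtension f 0 = 0 := (dyadicExtension_eq_self hf0 hmid (by simp)).trans hf0
  let L := (AddMonoidHom.ofMapMidpoint ℝ ℝ (dyadicExtension f) hS0
    (dyadicExtension_midpoint hf0 hmid)).toRealLinearMap (Isometry.of_dist_eq hdist).continuous
  let S : E →ₗᵢ[ℝ] F := ⟨L.toLinearMap, fun a => by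
    rw [← dist_zero_right, ← dist_zero_right a, ← hdist a 0, hS0]; rfl⟩
  have hSf : EqOn S f (ball 0 2⁻¹) := fun a ha =>
    dyadicExtension_eq_self hf0 hmid (mem_ball_zero_iff.1 ha)
  have hrange : ball (0 : F) 2⁻¹ ⊆ range S := by
    intro v hv
    obtain ⟨u, hu, rfl⟩ := hf.surjOn (ball_subset_ball (by norm_num) hv)
    have hnorm : dist u 0 = dist (f u) 0 := by rw [← hf0, hiso u hu 0 (mem_ball_self one_pos)]
    have hu' : u ∈ ball (0 : E) 2⁻¹ := by rw [mem_ball, hnorm]; exact hv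
    exact ⟨u, hSf hu'⟩
  have hsurj : Function.Surjective S := by
    refine LinearMap.range_eq_top.1 (Submodule.eq_top_of_nonempty_interior' _ ⟨0, ?_⟩)
    exact mem_interior_iff_mem_nhds.2 (mem_of_superset (ball_mem_nhds 0 (by norm_num)) hrange)
  exact ⟨LinearIsometryEquiv.ofSurjective S hsurj, hSf⟩

end DyadicExtension

lemma LinearMap.map_mul_of_map_add_add_mul {A B : Type*} [NormedRing A] [NormedAlgebra ℝ A]
    [Ring B] [Algebra ℝ B] (S : A →ₗ[ℝ] B) {ε : ℝ} (hε : 0 < ε)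
    (hS : ∀ u v : A, ‖u‖ < ε → ‖v‖ < ε → S (u + v + u * v) = S u + S v + S u * S v)
    (a b : A) : S (a * b) = S a * S b := by
  have hsmall : ∀ c : A, ∀ᶠ t : ℝ in 𝓝[≠] 0, ‖t • c‖ < ε := fun c => by
    have hlim : Tendsto (fun t : ℝ => ‖t • c‖) (𝓝 0) (𝓝 0) := by
      simpa using ((tendsto_id (x := 𝓝 (0 : ℝ))).smul_const c).norm
    exact nhdsWithin_le_nhds (hlim.eventually_lt_const hε)
  obtain ⟨t, ⟨hta, htb⟩, ht⟩ := (((hsmall a).and (hsmall b)).and self_mem_nhdsWithin).exists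
  have key := hS _ _ hta htb
  rw [smul_mul_smul_comm, map_add, map_add, map_smul, map_smul, map_smul, smul_mul_smul_comm,
    add_right_inj] at key
  exact smul_right_injective B (mul_ne_zero ht ht) key

section Recenter

variable {A B : Type*} [NormedRing A] [NormedRing B] {GA : Set A} {GB : Set B} {T : A → B}

lemma map_one_of_bijOn (hT : BijOn T GA GB) (hmul : ∀ x ∈ GA, ∀ y ∈ GA, T (x * y) = T x * T y)
    (h1A : (1 : A) ∈ GA) (h1B : (1 : B) ∈ GB) : T 1 = 1 := by
  obtain ⟨x, hx, hTx⟩ := hT.surjOn h1B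
  simpa [hTx] using (hmul x hx 1 h1A).symm

lemma one_add_mem_ball_one {R : Type*} [NormedRing R] {u : R} (hu : u ∈ ball (0 : R) 1) :
    1 + u ∈ ball (1 : R) 1 := by
  rwa [mem_ball_iff_norm, add_sub_cancel_left, ← mem_ball_zero_iff]

def recenter (T : A → B) (w : A) : B := T (1 + w) - 1

lemma recenter_zero (hT1 : T 1 = 1) : recenter T 0 = 0 := by
  simp [recenter, hT1]

lemma dist_recenter (hA : ball 1 1 ⊆ GA) (hiso : ∀ x ∈ GA, ∀ y ∈ GA, dist (T x) (T y) = dist x y)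
    {u v : A} (hu : u ∈ ball (0 : A) 1) (hv : v ∈ ball (0 : A) 1) :
    dist (recenter T u) (recenter T v) = dist u v := by
  rw [recenter, recenter, dist_sub_right, hiso _ (hA (one_add_mem_ball_one hu)) _
    (hA (one_add_mem_ball_one hv)), dist_add_left]

lemma bijOn_recenter (hA : ball 1 1 ⊆ GA) (hB : ball 1 1 ⊆ GB) (hT : BijOn T GA GB)
    (hiso : ∀ x ∈ GA, ∀ y ∈ GA, dist (T x) (T y) = dist x y) (hT1 : T 1 = 1) :
    BijOn (recenter T) (ball 0 1) (ball 0 1) := by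
  have h0 : (0 : A) ∈ ball (0 : A) 1 := mem_ball_self one_pos
  refine ⟨fun u hu => ?_, fun u hu v hv h => ?_, fun v hv => ?_⟩
  · rw [mem_ball, ← recenter_zero hT1, dist_recenter hA hiso hu h0]
    exact hu
  · exact dist_eq_zero.1 ((dist_recenter hA hiso hu hv).symm.trans (by rw [h, dist_self]))
  · obtain ⟨x, hx, hTx⟩ := hT.surjOn (hB (one_add_mem_ball_one hv))
    have h1 : (1 : A) ∈ GA := hA (mem_ball_self one_pos)
    refine ⟨x - 1, ?_, by simp [recenter, hTx]⟩
    rw [mem_ball, dist_zero_right, ← dist_eq_norm, ← hiso x hx 1 h1, hTx, hT1, dist_eq_norm,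
      add_sub_cancel_left, ← dist_zero_right]
    exact hv

lemma recenter_add_add_mul (hA : ball 1 1 ⊆ GA)
    (hmul : ∀ x ∈ GA, ∀ y ∈ GA, T (x * y) = T x * T y) {u v : A}
    (hu : u ∈ ball (0 : A) 1) (hv : v ∈ ball (0 : A) 1) :
    recenter T (u + v + u * v) =
      recenter T u + recenter T v + recenter T u * recenter T v := by
  have h : 1 + (u + v + u * v) = (1 + u) * (1 + v) := by noncomm_ring
  simp only [recenter]
  rw [h, hmul _ (hA (one_add_mem_ball_one hu)) _ (hA (one_add_mem_ball_one hv))]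
  noncomm_ring

end Recenter

section InvertibleGroups

lemma ball_one_subset_setOf_isUnit {R : Type*} [NormedRing R] [HasSummableGeomSeries R] :
    ball (1 : R) 1 ⊆ {x | IsUnit x} :=
  fun _ hx => by_contra fun h => nonunits.subset_compl_ball h hx

lemma ball_one_subset_connectedComponentIn_setOf_isUnit {R : Type*} [NormedRing R]
    [NormedSpace ℝ R] [HasSummableGeomSeries R] :
    ball (1 : R) 1 ⊆ connectedComponentIn {x | IsUnit x} 1 :=
  isPreconnected_ball.subset_connectedComponentIn (mem_ball_self one_pos)
    ball_one_subset_setOf_isUnit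

variable {A B : Type*} [NormedRing A] [NormedRing B]

lemma MulEquiv.image_setOf_isUnit (e : A ≃* B) : e '' {x | IsUnit x} = {y | IsUnit y} := by
  ext y
  refine ⟨?_, fun hy => ⟨e.symm y, hy.map e.symm, e.apply_symm_apply y⟩⟩
  rintro ⟨x, hx, rfl⟩
  exact hx.map e

lemma MulEquiv.image_connectedComponentIn_setOf_isUnit (e : A ≃* B) (he : Isometry e) :
    e '' connectedComponentIn {x | IsUnit x} 1 = connectedComponentIn {y | IsUnit y} 1 := by
  have h := (IsometryEquiv.mk e.toEquiv he).toHomeomorph.image_connectedComponentIn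
    (show (1 : A) ∈ {x : A | IsUnit x} from isUnit_one)
  simpa [e.image_setOf_isUnit] using h

lemma MulEquiv.isIsometricallyIsomorphicGroup_image (e : A ≃* B) (he : Isometry e) (G : Set A) :
    IsIsometricallyIsomorphicGroup G (e '' G) :=
  ⟨e, e.injective.injOn.bijOn_image, fun x _ y _ => map_mul e x y, fun x _ y _ => he.dist_eq x y⟩

lemma MulEquiv.isIsometricallyIsomorphicGroup_setOf_isUnit (e : A ≃* B) (he : Isometry e) :
    IsIsometricallyIsomorphicGroup {x : A | IsUnit x} {y : B | IsUnit y} :=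
  e.image_setOf_isUnit ▸ e.isIsometricallyIsomorphicGroup_image he _

lemma MulEquiv.isIsometricallyIsomorphicGroup_connectedComponentIn_setOf_isUnit (e : A ≃* B)
    (he : Isometry e) :
    IsIsometricallyIsomorphicGroup (connectedComponentIn {x : A | IsUnit x} 1)
      (connectedComponentIn {y : B | IsUnit y} 1) :=
  e.image_connectedComponentIn_setOf_isUnit he ▸ e.isIsometricallyIsomorphicGroup_image he _

theorem IsIsometricallyIsomorphicGroup.exists_algEquiv_isometry [NormedAlgebra ℝ A]
    [NormedAlgebra ℝ B] {GA : Set A} {GB : Set B} (h : IsIsometricallyIsomorphicGroup GA GB)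
    (hA : ball 1 1 ⊆ GA) (hB : ball 1 1 ⊆ GB) : ∃ e : A ≃ₐ[ℝ] B, Isometry e := by
  obtain ⟨T, hT, hmul, hiso⟩ := h
  have hT1 := map_one_of_bijOn hT hmul (hA (mem_ball_self one_pos)) (hB (mem_ball_self one_pos))
  obtain ⟨S, hS⟩ := exists_linearIsometryEquiv_eqOn_ball (bijOn_recenter hA hB hT hiso hT1)
    (fun u hu v hv => dist_recenter hA hiso hu hv) (recenter_zero hT1)
  have hSmul : ∀ a b, S (a * b) = S a * S b := by
    refine S.toLinearEquiv.toLinearMap.map_mul_of_map_add_add_mul (ε := 8⁻¹) (by norm_num)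
      fun u v hu hv => ?_
    have hsmall : ∀ {w : A}, ‖w‖ < 8⁻¹ → w ∈ ball (0 : A) 2⁻¹ := fun hw =>
      mem_ball_zero_iff.2 (hw.trans (by norm_num))
    have hunit : ∀ {w : A}, w ∈ ball (0 : A) 2⁻¹ → w ∈ ball (0 : A) 1 :=
      fun hw => ball_subset_ball (by norm_num) hw
    have huv : ‖u + v + u * v‖ < 2⁻¹ := by
      calc ‖u + v + u * v‖ ≤ ‖u‖ + ‖v‖ + ‖u‖ * ‖v‖ :=
            (norm_add_le _ _).trans (add_le_add (norm_add_le _ _) (norm_mul_le _ _))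
        _ < 2⁻¹ := by nlinarith [norm_nonneg u, norm_nonneg v]
    change S (u + v + u * v) = S u + S v + S u * S v
    rw [hS (mem_ball_zero_iff.2 huv), hS (hsmall hu), hS (hsmall hv),
      recenter_add_add_mul hA hmul (hunit (hsmall hu)) (hunit (hsmall hv))]
  have hS1 : S 1 = 1 := by
    obtain ⟨x, hx⟩ := S.surjective 1
    simpa [hx] using (hSmul x 1).symm
  exact ⟨AlgEquiv.ofLinearEquiv S.toLinearEquiv hS1 hSmul, S.isometry⟩

end InvertibleGroups

/-- Corollary 4.2: for unital complex Banach algebras `A` and `B`, the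
principal components `A⁻¹ₑ` and `B⁻¹ₑ` are isometrically isomorphic as
metrizable groups if and only if the full invertible groups `A⁻¹` and `B⁻¹`
are; in this case `A` is isometrically isomorphic to `B` as a real Banach
algebra. -/
theorem principal_component_isometric_iso_iff_units_isometric_iso
    {A B : Type*} [NormedRing A] [NormedAlgebra ℂ A] [CompleteSpace A]
    [NormedRing B] [NormedAlgebra ℂ B] [CompleteSpace B] :
    (IsIsometricallyIsomorphicGroup
        (connectedComponentIn {x : A | IsUnit x} 1)
        (connectedComponentIn {y : B | IsUnit y} 1) ↔
      IsIsometricallyIsomorphicGroup {x : A | IsUnit x} {y : B | IsUnit y}) ∧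
    (IsIsometricallyIsomorphicGroup
        (connectedComponentIn {x : A | IsUnit x} 1)
        (connectedComponentIn {y : B | IsUnit y} 1) →
      ∃ S : A → B,
        Function.Bijective S ∧
        (∀ x y : A, S (x + y) = S x + S y) ∧
        (∀ (r : ℝ) (x : A), S (r • x) = r • S x) ∧
        (∀ x y : A, S (x * y) = S x * S y) ∧
        (∀ x y : A, dist (S x) (S y) = dist x y)) := by
  have hA := ball_one_subset_setOf_isUnit (R := A)
  have hB := ball_one_subset_setOf_isUnit (R := B)
  have hA₀ := ball_one_subset_connectedComponentIn_setOf_isUnit (R := A)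
  have hB₀ := ball_one_subset_connectedComponentIn_setOf_isUnit (R := B)
  refine ⟨⟨fun h => ?_, fun h => ?_⟩, fun h => ?_⟩
  · obtain ⟨e, he⟩ := h.exists_algEquiv_isometry hA₀ hB₀
    exact (e : A ≃* B).isIsometricallyIsomorphicGroup_setOf_isUnit he
  · obtain ⟨e, he⟩ := h.exists_algEquiv_isometry hA hB
    exact (e : A ≃* B).isIsometricallyIsomorphicGroup_connectedComponentIn_setOf_isUnit he
  · obtain ⟨e, he⟩ := h.exists_algEquiv_isometry hA₀ hB₀
    exact ⟨e, e.bijective, map_add e, map_smul e, map_mul e, he.dist_eq⟩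
end

section
/- Let A and B be unital complex Banach algebras, let 𝔄 and 𝔅 be open subgroups of A⁻¹ and B⁻¹ respectively, and suppose there exists a surjective isometry T : 𝔄 → 𝔅. If B is semisimple, then A is semisimple. -/
/-!
Let `a` lie in the Jacobson radical of `A`. Then `u + s • a` is invertible for every unit `u`,
and since `𝔄` is closed in `A⁻¹`, the set `𝔄` is invariant under translation by `ℝ a`.
A surjective isometry between open subsets of real normed spaces is locally affine: it preserves
midpoints of pairs whose midpoint balls lie in both sets (Väisälä's proof of the Mazur–Ulam
theorem, run with the iterated "central subsets" of the lens between the two points). Hence the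
displacement `T (u + a) - T u` is locally constant on `𝔄`, so it takes a single value `d` on the
preconnected set `T⁻¹ (T 1 • B⁰)`, where `B⁰` is the principal component of `B⁻¹`. Consequently
`v + T 1⁻¹ * d` is invertible for every `v ∈ B⁰`. If a maximal left ideal `M` missed
`c = T 1⁻¹ * d`, the `B⁰`-orbits `{g x + m}` would be open (open mapping theorem) and partition the
connected set `Mᶜ`, so `c ≡ -g mod M` for some `g ∈ B⁰`, putting the unit `g + c` in `M`.
So `c ∈ rad B = 0`, whence `d = 0` and `‖a‖ = ‖T (1 + a) - T 1‖ = 0`.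
-/

open Metric Set Filter Topology Bornology

section CentralSubset

variable {X Y : Type*} [PseudoMetricSpace X] [PseudoMetricSpace Y]

def centralSubset (S : Set X) : Set X :=
  {z ∈ S | ∀ w ∈ S, dist z w ≤ diam S / 2}

def halfwaySet (S : Set X) (x y : X) : Set X :=
  {z ∈ S | dist z x ≤ dist x y / 2 ∧ dist z y ≤ dist x y / 2}

theorem centralSubset_subset (S : Set X) : centralSubset S ⊆ S := fun _ hz => hz.1

theorem iterate_centralSubset_subset (S : Set X) (n : ℕ) : centralSubset^[n] S ⊆ S := by
  induction n with
  | zero => exact subset_rfl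
  | succ n ih =>
    rw [Function.iterate_succ_apply']
    exact (centralSubset_subset _).trans ih

theorem isBounded_iterate_centralSubset {S : Set X} (hS : IsBounded S) (n : ℕ) :
    IsBounded (centralSubset^[n] S) :=
  hS.subset (iterate_centralSubset_subset S n)

theorem diam_centralSubset_le (S : Set X) :
    diam (centralSubset S) ≤ diam S / 2 :=
  diam_le_of_forall_dist_le (by positivity) fun _ hz _ hw => hz.2 _ hw.1

theorem diam_iterate_centralSubset_le (S : Set X) (n : ℕ) :
    diam (centralSubset^[n] S) ≤ diam S / 2 ^ n := by
  induction n with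
  | zero => simp
  | succ n ih =>
    rw [Function.iterate_succ_apply', pow_succ, ← div_div]
    exact (diam_centralSubset_le _).trans (by gcongr)

theorem isBounded_halfwaySet (S : Set X) (x y : X) : IsBounded (halfwaySet S x y) :=
  isBounded_closedBall.subset fun _ hz => mem_closedBall.2 hz.2.1

theorem diam_halfwaySet_le (S : Set X) (x y : X) : diam (halfwaySet S x y) ≤ dist x y :=
  diam_le_of_forall_dist_le dist_nonneg fun z hz w hw => by
    linarith [dist_triangle_right z w x, hz.2.1, hw.2.1]

variable {f : X → Y} {S : Set X}

theorem diam_image_of_dist_eq (hf : ∀ x ∈ S, ∀ y ∈ S, dist (f x) (f y) = dist x y) :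
    diam (f '' S) = diam S := by
  have hiso : Isometry (S.domRestrict f) :=
    Isometry.of_dist_eq fun x y => hf x x.2 y y.2
  rw [← range_domRestrict, hiso.diam_range, ← isometry_subtype_coe.diam_range, Subtype.range_coe]

theorem continuousOn_of_dist_eq (hf : ∀ x ∈ S, ∀ y ∈ S, dist (f x) (f y) = dist x y) :
    ContinuousOn f S :=
  (LipschitzOnWith.of_dist_le_mul fun x hx y hy => by simp [hf x hx y hy] :
    LipschitzOnWith 1 f S).continuousOn

theorem image_centralSubset (hf : ∀ x ∈ S, ∀ y ∈ S, dist (f x) (f y) = dist x y) :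
    f '' centralSubset S = centralSubset (f '' S) := by
  rw [centralSubset, centralSubset, diam_image_of_dist_eq hf]
  ext z
  simp only [mem_image, mem_ofPred_eq, forall_exists_index, and_imp, forall_apply_eq_imp_iff₂]
  constructor
  · rintro ⟨x, ⟨hxS, hx⟩, rfl⟩
    exact ⟨⟨x, hxS, rfl⟩, fun w hw => (hf x hxS w hw).trans_le (hx w hw)⟩
  · rintro ⟨⟨x, hxS, rfl⟩, hx⟩
    exact ⟨x, ⟨hxS, fun w hw => (hf x hxS w hw).symm.trans_le (hx w hw)⟩, rfl⟩

theorem image_iterate_centralSubset (hf : ∀ x ∈ S, ∀ y ∈ S, dist (f x) (f y) = dist x y)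
    (n : ℕ) : f '' centralSubset^[n] S = centralSubset^[n] (f '' S) := by
  induction n with
  | zero => rfl
  | succ n ih =>
    rw [Function.iterate_succ_apply', Function.iterate_succ_apply', ← ih]
    exact image_centralSubset fun x hx y hy =>
      hf x (iterate_centralSubset_subset S n hx) y (iterate_centralSubset_subset S n hy)

theorem image_halfwaySet (hf : ∀ x ∈ S, ∀ y ∈ S, dist (f x) (f y) = dist x y) {x y : X}
    (hx : x ∈ S) (hy : y ∈ S) : f '' halfwaySet S x y = halfwaySet (f '' S) (f x) (f y) := by
  ext z
  simp only [halfwaySet, mem_image, mem_ofPred_eq, hf x hx y hy]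
  constructor
  · rintro ⟨w, ⟨hwS, hwx, hwy⟩, rfl⟩
    exact ⟨⟨w, hwS, rfl⟩, (hf w hwS x hx).trans_le hwx, (hf w hwS y hy).trans_le hwy⟩
  · rintro ⟨⟨w, hwS, rfl⟩, hwx, hwy⟩
    exact ⟨w, ⟨hwS, (hf w hwS x hx).symm.trans_le hwx, (hf w hwS y hy).symm.trans_le hwy⟩, rfl⟩

end CentralSubset

theorem IsPreconnected.apply_eq_of_eventually_eq {X Y : Type*} [TopologicalSpace X] {s : Set X}
    (hs : IsPreconnected s) {f : X → Y} (hf : ∀ x ∈ s, ∀ᶠ y in 𝓝 x, f y = f x) {x y : X}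
    (hx : x ∈ s) (hy : y ∈ s) : f x = f y := by
  have : PreconnectedSpace s := isPreconnected_iff_preconnectedSpace.1 hs
  have hloc : IsLocallyConstant (s.domRestrict f) := (IsLocallyConstant.iff_eventually_eq _).2
    fun z => (continuous_subtype_val.tendsto z).eventually (hf z z.2)
  exact hloc.apply_eq_of_preconnectedSpace ⟨x, hx⟩ ⟨y, hy⟩

section LocalMazurUlam

variable {E F : Type*} [NormedAddCommGroup E] [NormedSpace ℝ E]
  [NormedAddCommGroup F] [NormedSpace ℝ F]

theorem midpoint_mem_iterate_centralSubset_halfwaySet {U : Set E} {x y : E}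
    (hU : closedBall (midpoint ℝ x y) (dist x y / 2) ⊆ U) (n : ℕ) :
    midpoint ℝ x y ∈ centralSubset^[n] (halfwaySet U x y) := by
  -- The reflection `σ` in `m` preserves every iterate, and `dist (σ w) w = 2 * dist m w`.
  set m := midpoint ℝ x y
  set σ := AffineIsometryEquiv.pointReflection ℝ m
  have hσx : σ x = y := AffineIsometryEquiv.pointReflection_midpoint_left x y
  have hσy : σ y = x := AffineIsometryEquiv.pointReflection_midpoint_right x y
  have hmaps : MapsTo σ (halfwaySet U x y) (halfwaySet U x y) := by
    rintro z ⟨hzU, hzx, hzy⟩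
    have hσzx : dist (σ z) x = dist z y := by rw [← hσy, σ.dist_map]
    have hσzy : dist (σ z) y = dist z x := by rw [← hσx, σ.dist_map]
    have hzm : 2 * dist m z ≤ dist x y := by
      rw [← AffineIsometryEquiv.dist_pointReflection_self_real]
      linarith [dist_triangle (σ z) x z, dist_comm x z]
    refine ⟨hU ?_, hσzx.trans_le hzy, hσzy.trans_le hzx⟩
    rw [mem_closedBall, AffineIsometryEquiv.dist_pointReflection_fixed, dist_comm]
    linarith
  have hσH : σ '' halfwaySet U x y = halfwaySet U x y :=
    hmaps.image_subset.antisymm fun z hz =>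
      ⟨σ z, hmaps hz, AffineIsometryEquiv.pointReflection_involutive (𝕜 := ℝ) m z⟩
  have hσ : ∀ n, σ '' centralSubset^[n] (halfwaySet U x y) =
      centralSubset^[n] (halfwaySet U x y) := fun n => by
    rw [image_iterate_centralSubset (fun p _ q _ => σ.dist_map p q), hσH]
  induction n with
  | zero =>
    refine ⟨hU (mem_closedBall_self (by positivity)), ?_, ?_⟩ <;>
      simp [m, dist_midpoint_left, dist_midpoint_right, div_eq_inv_mul]
  | succ n ih =>
    rw [Function.iterate_succ_apply']
    refine ⟨ih, fun w hw => ?_⟩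
    have hσw : σ w ∈ centralSubset^[n] (halfwaySet U x y) := hσ n ▸ mem_image_of_mem σ hw
    have := dist_le_diam_of_mem
      (isBounded_iterate_centralSubset (isBounded_halfwaySet U x y) n) hσw hw
    rw [AffineIsometryEquiv.dist_pointReflection_self_real] at this
    linarith

variable {f : E → F} {U : Set E}

theorem map_midpoint_of_closedBall_subset (hf : ∀ x ∈ U, ∀ y ∈ U, dist (f x) (f y) = dist x y)
    {x y : E} (hU : closedBall (midpoint ℝ x y) (dist x y / 2) ⊆ U)
    (hV : closedBall (midpoint ℝ (f x) (f y)) (dist x y / 2) ⊆ f '' U) :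
    f (midpoint ℝ x y) = midpoint ℝ (f x) (f y) := by
  have hx : x ∈ U := hU <| by simp [div_eq_inv_mul]
  have hy : y ∈ U := hU <| by simp [div_eq_inv_mul]
  have hfxy : dist (f x) (f y) = dist x y := hf x hx y hy
  have hH : ∀ n, f '' centralSubset^[n] (halfwaySet U x y) =
      centralSubset^[n] (halfwaySet (f '' U) (f x) (f y)) := fun n => by
    rw [image_iterate_centralSubset fun p hp q hq => hf p hp.1 q hq.1, image_halfwaySet hf hx hy]
  have hdist : ∀ n : ℕ, dist (f (midpoint ℝ x y)) (midpoint ℝ (f x) (f y)) ≤ dist x y / 2 ^ n := by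
    intro n
    have hfm := hH n ▸ mem_image_of_mem f (midpoint_mem_iterate_centralSubset_halfwaySet hU n)
    have hm := midpoint_mem_iterate_centralSubset_halfwaySet (hfxy.symm ▸ hV) n
    calc _ ≤ diam (centralSubset^[n] (halfwaySet (f '' U) (f x) (f y))) :=
          dist_le_diam_of_mem
            (isBounded_iterate_centralSubset (isBounded_halfwaySet _ _ _) n) hfm hm
      _ ≤ diam (halfwaySet (f '' U) (f x) (f y)) / 2 ^ n := diam_iterate_centralSubset_le _ n
      _ ≤ dist x y / 2 ^ n := by gcongr; exact hfxy ▸ diam_halfwaySet_le _ _ _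
  have hlim : Tendsto (fun n : ℕ => dist x y / 2 ^ n) atTop (𝓝 0) :=
    tendsto_const_nhds.div_atTop (tendsto_pow_atTop_atTop_of_one_lt one_lt_two)
  exact dist_le_zero.1 (ge_of_tendsto' hlim hdist)

theorem map_midpoint_of_ball_subset (hf : ∀ x ∈ U, ∀ y ∈ U, dist (f x) (f y) = dist x y)
    {x y : E} {R : ℝ} (hU : ball (midpoint ℝ x y) R ⊆ U)
    (hV : ball (f (midpoint ℝ x y)) R ⊆ f '' U) (hxy : dist x y < R) :
    f (midpoint ℝ x y) = midpoint ℝ (f x) (f y) := by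
  set m := midpoint ℝ x y
  have hUc : closedBall m (dist x y / 2) ⊆ U :=
    (closedBall_subset_ball (by linarith [dist_nonneg (x := x) (y := y)])).trans hU
  have hmx : dist m x = dist x y / 2 := by simp [m, div_eq_inv_mul]
  have hmy : dist m y = dist x y / 2 := by simp [m, dist_comm x y, div_eq_inv_mul]
  have hm : m ∈ U := hUc (mem_closedBall_self (by positivity))
  have hx : x ∈ U := hUc (mem_closedBall'.2 hmx.le)
  have hy : y ∈ U := hUc (mem_closedBall'.2 hmy.le)
  have hfm : dist (f m) (midpoint ℝ (f x) (f y)) ≤ dist x y / 2 := by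
    have := dist_midpoint_midpoint_le (f m) (f m) (f x) (f y)
    rw [midpoint_self, hf m hm x hx, hf m hm y hy, hmx, hmy] at this
    linarith
  refine map_midpoint_of_closedBall_subset hf hUc fun z hz => hV ?_
  rw [mem_closedBall] at hz
  rw [mem_ball]
  linarith [dist_triangle_right z (f m) (midpoint ℝ (f x) (f y))]

theorem map_add_sub_map_eq_of_ball_subset (hf : ∀ x ∈ U, ∀ y ∈ U, dist (f x) (f y) = dist x y)
    {p : E} {r : ℝ} (hU : ball p r ⊆ U) (hV : ball (f p) r ⊆ f '' U) {u v w : E}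
    (hu : dist u p < r / 8) (hv : dist v p < r / 8) (hw : ‖w‖ < r / 8) :
    f (u + w) - f u = f (v + w) - f v := by
  have hr : 0 < r := by linarith [norm_nonneg w]
  have huw : dist (u + w) p < r / 4 := by
    linarith [dist_triangle (u + w) u p, dist_self_add_left w u]
  have hvw : dist (v + w) p < r / 4 := by
    linarith [dist_triangle (v + w) v p, dist_self_add_left w v]
  have hm : midpoint ℝ u (v + w) = midpoint ℝ (u + w) v := by
    simp only [midpoint_eq_smul_add]
    congr 1
    abel
  obtain ⟨m, hm₁, hm₂⟩ : ∃ m, midpoint ℝ (u + w) v = m ∧ midpoint ℝ u (v + w) = m := ⟨_, rfl, hm⟩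
  have hmp : dist m p < r / 4 := by
    have := dist_midpoint_midpoint_le (u + w) v p p
    rw [midpoint_self, hm₁] at this
    linarith
  have hpU : p ∈ U := hU (mem_ball_self hr)
  have hmU : ball m (r / 2) ⊆ U := (ball_subset_ball' (by linarith)).trans hU
  have hmV : ball (f m) (r / 2) ⊆ f '' U := by
    refine (ball_subset_ball' ?_).trans hV
    rw [hf m (hmU (mem_ball_self (by linarith))) p hpU]
    linarith
  have h₁ := map_midpoint_of_ball_subset hf (hm₁ ▸ hmU) (hm₁ ▸ hmV)
    (by linarith [dist_triangle_right (u + w) v p])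
  have h₂ := map_midpoint_of_ball_subset hf (hm₂ ▸ hmU) (hm₂ ▸ hmV)
    (by linarith [dist_triangle_right u (v + w) p])
  rw [hm₁, ← hm₂, h₂] at h₁
  have h := congrArg (fun z => z + z) h₁
  simp only [midpoint_add_self] at h
  rw [sub_eq_sub_iff_add_eq_add, ← h, add_comm]

theorem map_add_sub_map_eq_of_forall_ball_subset
    (hf : ∀ x ∈ U, ∀ y ∈ U, dist (f x) (f y) = dist x y) {p a : E} {r : ℝ}
    (hU : ∀ s ∈ Icc (0 : ℝ) 1, ball (p + s • a) r ⊆ U)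
    (hV : ∀ s ∈ Icc (0 : ℝ) 1, ball (f (p + s • a)) r ⊆ f '' U) {u : E} (hu : dist u p < r / 8) :
    f (u + a) - f u = f (p + a) - f p := by
  have hr : 0 < r := by linarith [dist_nonneg (x := u) (y := p)]
  obtain ⟨N, hN⟩ := exists_nat_gt (8 * ‖a‖ / r)
  have hNpos : (0 : ℝ) < N := lt_of_le_of_lt (by positivity) hN
  set w : E := (N : ℝ)⁻¹ • a
  have hw : ‖w‖ < r / 8 := by
    rw [norm_smul, norm_inv, Real.norm_natCast, inv_mul_lt_iff₀ hNpos]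
    rw [div_lt_iff₀ hr] at hN
    linarith
  have hstep : ∀ k : ℕ, k ≤ N →
      f (u + (k : ℝ) • w) - f (p + (k : ℝ) • w) = f u - f p := by
    intro k
    induction k with
    | zero => simp
    | succ k ih =>
      intro hk
      have hs : (k : ℝ) / N ∈ Icc (0 : ℝ) 1 :=
        ⟨by positivity, div_le_one_of_le₀ (by exact_mod_cast (Nat.le_succ k).trans hk) hNpos.le⟩
      have hpk : p + (k : ℝ) • w = p + ((k : ℝ) / N) • a := by
        rw [smul_smul, div_eq_mul_inv]
      have h := map_add_sub_map_eq_of_ball_subset hf (hpk ▸ hU _ hs) (hpk ▸ hV _ hs)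
        (u := u + (k : ℝ) • w) (by rwa [dist_add_right]) (by rw [dist_self]; positivity) hw
      rw [← ih (Nat.le_of_succ_le hk), Nat.cast_succ, add_smul, one_smul, ← add_assoc,
        ← add_assoc]
      exact sub_eq_sub_iff_sub_eq_sub.1 h
  have := hstep N le_rfl
  rwa [smul_smul, mul_inv_cancel₀ hNpos.ne', one_smul, sub_eq_sub_iff_sub_eq_sub] at this

theorem eventually_map_add_sub_map_eq (hf : ∀ x ∈ U, ∀ y ∈ U, dist (f x) (f y) = dist x y)
    (hU : IsOpen U) (hV : IsOpen (f '' U)) {a : E}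
    (hUa : ∀ u ∈ U, ∀ s ∈ Icc (0 : ℝ) 1, u + s • a ∈ U) {p : E} (hp : p ∈ U) :
    ∀ᶠ u in 𝓝 p, f (u + a) - f u = f (p + a) - f p := by
  obtain ⟨r₁, hr₁, hballU⟩ := isOpen_iff.1 hU p hp
  have hK : IsCompact ((fun s : ℝ => f (p + s • a)) '' Icc 0 1) :=
    isCompact_Icc.image_of_continuousOn <| (continuousOn_of_dist_eq hf).comp
      (by fun_prop) fun s hs => hUa p hp s hs
  obtain ⟨r₂, hr₂, hballV⟩ := hK.exists_thickening_subset_open hV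
    (image_subset_iff.2 fun s hs => mem_image_of_mem f (hUa p hp s hs))
  have hr : 0 < min r₁ r₂ := lt_min hr₁ hr₂
  filter_upwards [ball_mem_nhds p (by positivity : 0 < min r₁ r₂ / 8)] with u hu
  refine map_add_sub_map_eq_of_forall_ball_subset hf (fun s hs z hz => ?_) (fun s hs => ?_) hu
  · have hz' : z - s • a ∈ U := hballU <| by
      rw [mem_ball, ← dist_add_right _ _ (s • a), sub_add_cancel]
      exact (mem_ball.1 hz).trans_le (min_le_left _ _)
    simpa using hUa _ hz' s hs
  · exact (ball_subset_ball (min_le_right _ _)).trans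
      ((ball_subset_thickening (mem_image_of_mem _ hs) _).trans hballV)

end LocalMazurUlam

section Displacement

variable {E F : Type*} [NormedAddCommGroup E] [NormedAddCommGroup F] {f : E → F} {U : Set E}

theorem add_mem_image_of_isPreconnected (hf : ∀ x ∈ U, ∀ y ∈ U, dist (f x) (f y) = dist x y)
    {a : E} (hloc : ∀ u ∈ U, ∀ᶠ v in 𝓝 u, f (v + a) - f v = f (u + a) - f u)
    (hUa : ∀ u ∈ U, u + a ∈ U) {Q : Set F} (hQ : IsPreconnected Q) (hQU : Q ⊆ f '' U)
    {p : E} (hp : p ∈ U) (hpQ : f p ∈ Q) {y : F} (hy : y ∈ Q) :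
    y + (f (p + a) - f p) ∈ f '' U := by
  set g := Function.invFunOn f U
  have hinj : InjOn f U := fun x hx y hy hxy =>
    dist_le_zero.1 (by rw [← hf x hx y hy, hxy, dist_self])
  have hgU : ∀ z ∈ f '' U, g z ∈ U := fun z hz => Function.invFunOn_mem hz
  have hfg : ∀ z ∈ f '' U, f (g z) = z := fun z hz => Function.invFunOn_eq hz
  have hg : ∀ z ∈ f '' U, ∀ z' ∈ f '' U, dist (g z) (g z') = dist z z' := fun z hz z' hz' => by
    rw [← hf _ (hgU z hz) _ (hgU z' hz'), hfg z hz, hfg z' hz']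
  have hP : IsPreconnected (g '' Q) := hQ.image g ((continuousOn_of_dist_eq hg).mono hQU)
  have hgp : g (f p) = p := hinj.leftInvOn_invFunOn hp
  have hconst := hP.apply_eq_of_eventually_eq (f := fun v => f (v + a) - f v)
    (fun _ ⟨z, hz, hzu⟩ => hzu ▸ hloc _ (hgU z (hQU hz)))
    (mem_image_of_mem g hy) (hgp ▸ mem_image_of_mem g hpQ)
  rw [← hconst, hfg y (hQU hy), add_sub_cancel]
  exact mem_image_of_mem f (hUa _ (hgU y (hQU hy)))

end Displacement

theorem isUnit_one_add_of_mem_jacobson_bot {R : Type*} [Ring R] {x : R}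
    (hx : x ∈ Ideal.jacobson (⊥ : Ideal R)) : IsUnit (1 + x) := by
  have hleft : ∀ y ∈ Ideal.jacobson (⊥ : Ideal R), ∃ z, z * (1 + y) = 1 := fun y hy => by
    obtain ⟨z, hz⟩ := Ideal.mem_jacobson_iff.1 hy 1
    rw [Ideal.mem_bot, mul_one, sub_eq_zero] at hz
    exact ⟨z, by rw [mul_add, mul_one, add_comm, hz]⟩
  obtain ⟨z, hz⟩ := hleft x hx
  obtain ⟨w, hw⟩ := hleft (-(z * x)) (neg_mem (Ideal.mul_mem_left _ z hx))
  have hz' : 1 + -(z * x) = z := by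
    rw [mul_add, mul_one] at hz
    rw [← hz]
    abel
  rw [hz'] at hw
  have hw' : w = 1 + x := calc
    w = w * (z * (1 + x)) := by rw [hz, mul_one]
    _ = 1 + x := by rw [← mul_assoc, hw, one_mul]
  exact ⟨⟨1 + x, z, hw' ▸ hw, hz⟩, rfl⟩

theorem isUnit_add_of_mem_jacobson_bot {R : Type*} [Ring R] {u x : R} (hu : IsUnit u)
    (hx : x ∈ Ideal.jacobson (⊥ : Ideal R)) : IsUnit (u + x) := by
  obtain ⟨u, rfl⟩ := hu
  have h := isUnit_one_add_of_mem_jacobson_bot (Ideal.mul_mem_left _ (↑u⁻¹ : R) hx)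
  rw [← Units.isUnit_units_mul u, mul_add, mul_one, ← mul_assoc, Units.mul_inv, one_mul] at h
  exact h

structure IsOpenSubgroupOfUnits {R : Type*} [Ring R] [TopologicalSpace R] (G : Set R) : Prop where
  isUnit : ∀ a ∈ G, IsUnit a
  one_mem : (1 : R) ∈ G
  mul_mem : ∀ a ∈ G, ∀ b ∈ G, a * b ∈ G
  inverse_mem : ∀ a ∈ G, Ring.inverse a ∈ G
  isOpen : IsOpen G

def principalComponent (R : Type*) [Monoid R] [TopologicalSpace R] : Set R :=
  connectedComponentIn {x : R | IsUnit x} 1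

section PrincipalComponent

variable {R : Type*} [Monoid R] [TopologicalSpace R]

theorem isPreconnected_principalComponent : IsPreconnected (principalComponent R) :=
  isPreconnected_connectedComponentIn

theorem isUnit_of_mem_principalComponent {x : R} (hx : x ∈ principalComponent R) : IsUnit x :=
  connectedComponentIn_subset {x : R | IsUnit x} 1 hx

theorem one_mem_principalComponent : (1 : R) ∈ principalComponent R :=
  mem_connectedComponentIn isUnit_one

end PrincipalComponent

namespace IsOpenSubgroupOfUnits

variable {R : Type*} [NormedRing R] {G : Set R}

theorem subset_of_isPreconnected (hG : IsOpenSubgroupOfUnits G) {s : Set R}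
    (hs : IsPreconnected s) (hsu : ∀ x ∈ s, IsUnit x) (hsG : (s ∩ G).Nonempty) : s ⊆ G := by
  refine hs.subset_of_closure_inter_subset hG.isOpen hsG fun x ⟨hxG, hxs⟩ => ?_
  obtain ⟨u, rfl⟩ := hsu x hxs
  have hnhds : {z : R | ↑u⁻¹ * z ∈ G} ∈ 𝓝 (u : R) :=
    (hG.isOpen.preimage (continuous_const_mul _)).mem_nhds (by simpa using hG.one_mem)
  obtain ⟨z, hzu, hzG⟩ := mem_closure_iff_nhds.1 hxG _ hnhds
  obtain ⟨v, hv⟩ := hG.isUnit _ hzu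
  have h := hG.mul_mem _ hzG _ (hG.inverse_mem _ hzu)
  rw [← hv, Ring.inverse_unit] at h
  have hz : z * ↑v⁻¹ = u := by
    rw [Units.mul_inv_eq_iff_eq_mul, hv, ← mul_assoc, Units.mul_inv, one_mul]
  exact hz ▸ h

theorem principalComponent_subset (hG : IsOpenSubgroupOfUnits G) : principalComponent R ⊆ G :=
  hG.subset_of_isPreconnected isPreconnected_principalComponent
    (fun _ => isUnit_of_mem_principalComponent) ⟨1, one_mem_principalComponent, hG.one_mem⟩

theorem add_mem_of_mem_jacobson_bot [NormedAlgebra ℂ R] (hG : IsOpenSubgroupOfUnits G) {u x : R}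
    (hu : u ∈ G) (hx : x ∈ Ideal.jacobson (⊥ : Ideal R)) : u + x ∈ G := by
  refine hG.subset_of_isPreconnected (convex_segment u (u + x)).isPreconnected ?_
    ⟨u, left_mem_segment ℝ u (u + x), hu⟩ (right_mem_segment ℝ u (u + x))
  rw [segment_eq_image']
  rintro _ ⟨t, -, rfl⟩
  rw [add_sub_cancel_left]
  exact isUnit_add_of_mem_jacobson_bot (hG.isUnit u hu) (Submodule.smul_of_tower_mem _ t hx)

end IsOpenSubgroupOfUnits

section PrincipalComponent

variable (R : Type*) [NormedRing R] [NormedAlgebra ℂ R] [CompleteSpace R]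

theorem isOpenSubgroupOfUnits_principalComponent :
    IsOpenSubgroupOfUnits (principalComponent R) where
  isUnit _ := isUnit_of_mem_principalComponent
  one_mem := one_mem_principalComponent
  mul_mem a ha b hb := by
    have haU : IsUnit a := isUnit_of_mem_principalComponent ha
    have hsub : (a * ·) '' principalComponent R ⊆ {x : R | IsUnit x} := by
      rintro _ ⟨y, hy, rfl⟩
      exact haU.mul (isUnit_of_mem_principalComponent hy)
    have h := (isPreconnected_principalComponent.image _
      (continuous_const_mul a).continuousOn).subset_connectedComponentIn
      ⟨1, one_mem_principalComponent, mul_one a⟩ hsub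
    rw [← connectedComponentIn_eq ha] at h
    exact h (mem_image_of_mem _ hb)
  inverse_mem a ha := by
    have hcont : ContinuousOn (Ring.inverse : R → R) (principalComponent R) := fun x hx => by
      obtain ⟨u, rfl⟩ := isUnit_of_mem_principalComponent hx
      exact (NormedRing.inverse_continuousAt u).continuousWithinAt
    have hsub : Ring.inverse '' principalComponent R ⊆ {x : R | IsUnit x} := by
      rintro _ ⟨y, hy, rfl⟩
      exact (isUnit_of_mem_principalComponent hy).ringInverse
    exact (isPreconnected_principalComponent.image _ hcont).subset_connectedComponentIn
      ⟨1, one_mem_principalComponent, Ring.inverse_one R⟩ hsub (mem_image_of_mem _ ha)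
  isOpen := Units.isOpen.connectedComponentIn

end PrincipalComponent

theorem Submodule.isPreconnected_compl {E : Type*} [AddCommGroup E] [Module ℂ E]
    [TopologicalSpace E] [ContinuousAdd E] [ContinuousSMul ℂ E] (M : Submodule ℂ E) :
    IsPreconnected (M : Set E)ᶜ := by
  refine isPreconnected_of_forall_pair fun x hx y hy => ?_
  set ψ : ℂ → E := fun z => x + z • (y - x)
  have hψM : (ψ ⁻¹' M).Subsingleton := by
    intro z₁ h₁ z₂ h₂
    by_contra hne
    have hdiff : (z₁ - z₂) • (y - x) ∈ M := by
      convert M.sub_mem h₁ h₂ using 1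
      simp only [ψ, sub_smul]
      abel
    have hyx : y - x ∈ M := (M.smul_mem_iff (sub_ne_zero.2 hne)).1 hdiff
    exact hx (by simpa [ψ] using M.sub_mem h₁ (M.smul_mem z₁ hyx))
  have hconn : IsConnected (ψ ⁻¹' M)ᶜ :=
    (hψM.countable.isPathConnected_compl_of_one_lt_rank
      (by rw [Complex.rank_real_complex]; norm_num)).isConnected
  refine ⟨ψ '' (ψ ⁻¹' M)ᶜ, fun _ ⟨z, hz, hψz⟩ => hψz ▸ hz, ⟨0, ?_, by simp [ψ]⟩,
    ⟨1, ?_, by simp [ψ]⟩, hconn.isPreconnected.image _ (by fun_prop)⟩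
  · simpa [ψ] using hx
  · simpa [ψ] using hy

section Radical

variable {R : Type*} [NormedRing R] [NormedAlgebra ℂ R] [CompleteSpace R]

theorem isOpen_setOf_mul_add_eq {M : Ideal R} (hM : M.IsMaximal) {x : R} (hx : x ∉ M) {G : Set R}
    (hG : IsOpen G) : IsOpen {y | ∃ g ∈ G, ∃ m ∈ M, g * x + m = y} := by
  set M' : Submodule ℂ R := M.restrictScalars ℂ
  have : CompleteSpace M' := (Ideal.IsMaximal.isClosed (hI := hM)).completeSpace_coe
  set φ : R × M' →L[ℂ] R := ((ContinuousLinearMap.mul ℂ R).flip x).coprod M'.subtypeL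
  have hφ : ∀ p : R × M', φ p = p.1 * x + p.2 := fun _ => rfl
  have hsurj : Function.Surjective φ := by
    intro z
    have htop : M ⊔ Ideal.span {x} = ⊤ := hM.1.2 _ <| SetLike.lt_iff_le_and_exists.2
      ⟨le_sup_left, x, Submodule.mem_sup_right (Ideal.mem_span_singleton_self x), hx⟩
    obtain ⟨m, hm, w, hw, rfl⟩ := Submodule.mem_sup.1 (htop ▸ Submodule.mem_top : z ∈ M ⊔ _)
    obtain ⟨a, rfl⟩ := Ideal.mem_span_singleton'.1 hw
    exact ⟨(a, ⟨m, hm⟩), by rw [hφ, add_comm]⟩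
  convert φ.isOpenMap hsurj _ (hG.prod isOpen_univ) using 1
  ext y
  simp [hφ, M']

theorem mem_jacobson_bot_of_forall_isUnit_add {G : Set R} (hG : IsOpenSubgroupOfUnits G) {c : R}
    (hc : ∀ g ∈ G, IsUnit (g + c)) : c ∈ Ideal.jacobson (⊥ : Ideal R) := by
  refine Ideal.mem_sInf.2 fun M ⟨_, hM⟩ => ?_
  by_contra hcM
  -- `O x` is the `G`-orbit of `x` modulo `M`; the orbits are open and partition the connected
  -- set `Mᶜ`, so `Mᶜ ⊆ O (-1)`, i.e. `c ≡ -g mod M` for some `g ∈ G`.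
  set O : R → Set R := fun x => {y | ∃ g ∈ G, ∃ m ∈ M, g * x + m = y}
  have hself : ∀ x, x ∈ O x := fun x => ⟨1, hG.one_mem, 0, M.zero_mem, by simp⟩
  have hneg : (-1 : R) ∉ M := fun h =>
    hM.ne_top (M.eq_top_iff_one.2 (by simpa using M.neg_mem h))
  have hclosed : closure (O (-1)) ∩ (M : Set R)ᶜ ⊆ O (-1) := by
    rintro y ⟨hy, hyM⟩
    obtain ⟨z, ⟨g, hg, m, hm, hgz⟩, g', hg', m', hm', hg'z⟩ :=
      mem_closure_iff.1 hy _ (isOpen_setOf_mul_add_eq hM hyM hG.isOpen) (hself y)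
    obtain ⟨u, rfl⟩ := hG.isUnit g hg
    refine ⟨Ring.inverse ↑u * g', hG.mul_mem _ (hG.inverse_mem _ hg) _ hg', ↑u⁻¹ * (m' - m),
      M.mul_mem_left _ (M.sub_mem hm' hm), ?_⟩
    calc Ring.inverse ↑u * g' * -1 + ↑u⁻¹ * (m' - m) = ↑u⁻¹ * (g' * -1 + m' - m) := by
          rw [Ring.inverse_unit]; noncomm_ring
      _ = ↑u⁻¹ * (↑u * y) := by rw [hg'z, ← hgz, add_sub_cancel_right]
      _ = y := Units.inv_mul_cancel_left u y
  obtain ⟨g, hg, m, hm, hgm⟩ :=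
    (M.restrictScalars ℂ).isPreconnected_compl.subset_of_closure_inter_subset
      (isOpen_setOf_mul_add_eq hM hneg hG.isOpen) ⟨-1, hneg, hself _⟩ hclosed hcM
  have hgc : g + c ∈ M := by rw [← hgm]; simpa using hm
  exact hM.ne_top (Ideal.eq_top_of_isUnit_mem _ hgc (hc g hg))

end Radical

/-- If there is a surjective isometry between open subgroups of the invertible
groups of unital complex Banach algebras `A` and `B`, and `B` is semisimple,
then `A` is semisimple. -/
theorem semisimple_of_isometry_open_subgroups
    {A B : Type*} [NormedRing A] [NormedAlgebra ℂ A] [CompleteSpace A]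
    [NormedRing B] [NormedAlgebra ℂ B] [CompleteSpace B]
    (𝔄 : Set A) (𝔅 : Set B)
    (h𝔄unit : ∀ a ∈ 𝔄, IsUnit a) (h𝔄one : (1 : A) ∈ 𝔄)
    (h𝔄mul : ∀ a ∈ 𝔄, ∀ b ∈ 𝔄, a * b ∈ 𝔄)
    (h𝔄inv : ∀ a ∈ 𝔄, Ring.inverse a ∈ 𝔄) (h𝔄open : IsOpen 𝔄)
    (h𝔅unit : ∀ b ∈ 𝔅, IsUnit b) (h𝔅one : (1 : B) ∈ 𝔅)
    (h𝔅mul : ∀ a ∈ 𝔅, ∀ b ∈ 𝔅, a * b ∈ 𝔅)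
    (h𝔅inv : ∀ b ∈ 𝔅, Ring.inverse b ∈ 𝔅) (h𝔅open : IsOpen 𝔅)
    (T : A → B) (hmaps : Set.MapsTo T 𝔄 𝔅) (hsurj : Set.SurjOn T 𝔄 𝔅)
    (hiso : ∀ a ∈ 𝔄, ∀ b ∈ 𝔄, ‖T a - T b‖ = ‖a - b‖)
    (hBss : Ideal.jacobson (⊥ : Ideal B) = ⊥) :
    Ideal.jacobson (⊥ : Ideal A) = ⊥ := by
  have h𝔄 : IsOpenSubgroupOfUnits 𝔄 := ⟨h𝔄unit, h𝔄one, h𝔄mul, h𝔄inv, h𝔄open⟩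
  have h𝔅 : IsOpenSubgroupOfUnits 𝔅 := ⟨h𝔅unit, h𝔅one, h𝔅mul, h𝔅inv, h𝔅open⟩
  have hT : ∀ x ∈ 𝔄, ∀ y ∈ 𝔄, dist (T x) (T y) = dist x y := by
    simpa only [dist_eq_norm] using hiso
  have himage : T '' 𝔄 = 𝔅 := hsurj.image_eq_of_mapsTo hmaps
  refine eq_bot_iff.2 fun a ha => (Submodule.mem_bot ℂ).2 ?_
  have hflow : ∀ u ∈ 𝔄, ∀ s : ℝ, u + s • a ∈ 𝔄 := fun u hu s =>
    h𝔄.add_mem_of_mem_jacobson_bot hu (Submodule.smul_of_tower_mem _ s ha)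
  have hloc : ∀ u ∈ 𝔄, ∀ᶠ v in 𝓝 u, T (v + a) - T v = T (u + a) - T u := fun u hu =>
    eventually_map_add_sub_map_eq hT h𝔄open (himage ▸ h𝔅open) (fun v hv s _ => hflow v hv s) hu
  obtain ⟨β, hβ⟩ := h𝔅unit _ (hmaps h𝔄one)
  have hQ : ((β : B) * ·) '' principalComponent B ⊆ 𝔅 := by
    rintro _ ⟨v, hv, rfl⟩
    exact h𝔅mul _ (hβ ▸ hmaps h𝔄one) _ (h𝔅.principalComponent_subset hv)
  have hd : ∀ v ∈ principalComponent B, ↑β * v + (T (1 + a) - T 1) ∈ 𝔅 := fun v hv =>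
    himage ▸ add_mem_image_of_isPreconnected hT hloc (fun u hu => by simpa using hflow u hu 1)
      (isPreconnected_principalComponent.image _ (continuous_const_mul _).continuousOn)
      (himage ▸ hQ) h𝔄one ⟨1, one_mem_principalComponent, (mul_one _).trans hβ⟩
      (mem_image_of_mem _ hv)
  have hc : ↑β⁻¹ * (T (1 + a) - T 1) ∈ Ideal.jacobson (⊥ : Ideal B) :=
    mem_jacobson_bot_of_forall_isUnit_add (isOpenSubgroupOfUnits_principalComponent B)
      fun v hv => by
        rw [← Units.isUnit_units_mul β, mul_add, Units.mul_inv_cancel_left]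
        exact h𝔅unit _ (hd v hv)
  rw [hBss, Submodule.mem_bot, Units.mul_right_eq_zero] at hc
  rw [← norm_eq_zero, ← add_sub_cancel_left 1 a, ← hiso _ (by simpa using hflow 1 h𝔄one 1) _ h𝔄one,
    hc, norm_zero]
end

section
/- Let A and B be unital complex Banach algebras, let 𝔄 be an open subgroup of A⁻¹, and let Φ : A → B be a real-linear map such that Φ(xy) = Φ(x)Φ(y) for all x, y ∈ 𝔄. Then Φ is multiplicative on all of A: Φ(ab) = Φ(a)Φ(b) for all a, b ∈ A. -/
/-- If a real-linear map `Φ` between unital complex Banach algebras is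
multiplicative on an open subgroup `𝔄` of the invertible group `A⁻¹`, then it
is multiplicative on all of `A`. -/
theorem multiplicative_of_multiplicative_on_open_subgroup
    {A B : Type*} [NormedRing A] [NormedAlgebra ℂ A] [CompleteSpace A]
    [NormedRing B] [NormedAlgebra ℂ B] [CompleteSpace B]
    (𝔄 : Set A)
    (h𝔄unit : ∀ a ∈ 𝔄, IsUnit a) (h𝔄one : (1 : A) ∈ 𝔄)
    (h𝔄mul : ∀ a ∈ 𝔄, ∀ b ∈ 𝔄, a * b ∈ 𝔄)
    (h𝔄inv : ∀ a ∈ 𝔄, Ring.inverse a ∈ 𝔄) (h𝔄open : IsOpen 𝔄)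
    (Φ : A →ₗ[ℝ] B)
    (hmul : ∀ x ∈ 𝔄, ∀ y ∈ 𝔄, Φ (x * y) = Φ x * Φ y) :
    ∀ a b : A, Φ (a * b) = Φ a * Φ b := by
  intro a b
  obtain ⟨ε, hε, hball⟩ := Metric.isOpen_iff.mp h𝔄open 1 h𝔄one
  set r : ℝ := max (‖a‖ / ε) (‖b‖ / ε) + 1 with hr
  have hr0 : 0 < r := by
    have h0 : (0:ℝ) ≤ max (‖a‖ / ε) (‖b‖ / ε) :=
      le_max_of_le_left (div_nonneg (norm_nonneg a) hε.le)
    show (0:ℝ) < max (‖a‖ / ε) (‖b‖ / ε) + 1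
    linarith
  have hrne : r ≠ 0 := hr0.ne'
  set u : A := 1 + r⁻¹ • a with hu
  set v : A := 1 + r⁻¹ • b with hv
  have hmem : ∀ (c : A), ‖c‖ / ε ≤ max (‖a‖ / ε) (‖b‖ / ε) →
      (1 + r⁻¹ • c : A) ∈ 𝔄 := by
    intro c hc
    apply hball
    rw [Metric.mem_ball, dist_eq_norm]
    have : (1 + r⁻¹ • c - 1 : A) = r⁻¹ • c := by abel
    rw [this, norm_smul, norm_inv, Real.norm_eq_abs, abs_of_pos hr0]
    rw [inv_mul_lt_iff₀ hr0]
    have : ‖c‖ / ε < r := lt_of_le_of_lt hc (by linarith [le_refl r])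
    calc ‖c‖ = ‖c‖ / ε * ε := by field_simp
    _ < r * ε := by exact mul_lt_mul_of_pos_right this hε
  have hu𝔄 : u ∈ 𝔄 := hmem a (le_max_left _ _)
  have hv𝔄 : v ∈ 𝔄 := hmem b (le_max_right _ _)
  have ha : a = r • (u - 1) := by
    rw [hu]; simp [smul_smul, hrne]
  have hb : b = r • (v - 1) := by
    rw [hv]; simp [smul_smul, hrne]
  have h11 : Φ 1 * Φ 1 = Φ 1 := by
    have := hmul 1 h𝔄one 1 h𝔄one; rw [one_mul] at this; exact this.symm
  have hu1 : Φ u * Φ 1 = Φ u := by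
    have := hmul u hu𝔄 1 h𝔄one; rw [mul_one] at this; exact this.symm
  have h1v : Φ 1 * Φ v = Φ v := by
    have := hmul 1 h𝔄one v hv𝔄; rw [one_mul] at this; exact this.symm
  have huv : Φ (u * v) = Φ u * Φ v := hmul u hu𝔄 v hv𝔄
  have hexp : (u - 1) * (v - 1) = u * v - u - v + 1 := by noncomm_ring
  calc Φ (a * b) = Φ ((r • (u - 1)) * (r • (v - 1))) := by rw [← ha, ← hb]
  _ = (r * r) • Φ ((u - 1) * (v - 1)) := by
      rw [smul_mul_smul_comm, map_smul]
  _ = (r * r) • (Φ u * Φ v - Φ u - Φ v + Φ 1) := by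
      rw [hexp, map_add, map_sub, map_sub, huv]
  _ = (r * r) • ((Φ u - Φ 1) * (Φ v - Φ 1)) := by
      rw [sub_mul, mul_sub, mul_sub, hu1, h1v, h11]; congr 1; abel
  _ = (r • Φ (u - 1)) * (r • Φ (v - 1)) := by
      rw [map_sub, map_sub, smul_mul_smul_comm]
  _ = Φ a * Φ b := by rw [← map_smul, ← map_smul, ← ha, ← hb]
end
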